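/- arXiv:2202.01519 — 6 statements merged into one kernel-verified Lean document; each statement's English description precedes it below -/
import Mathlib

section
/- Two oriented paths in the Cayley graph of the Heisenberg group encoded by binary words α, β ∈ {0,1}^k satisfy α(k) = β(k) (the paths are at the same vertex after k steps) if and only if ∑_{j<k} α_j = ∑_{j<k} β_j and ∑_{j<k} j·α_j = ∑_{j<k} j·β_j. -/
/-- The discrete Heisenberg group realized on ℤ³. -/
structure Heis where
  x : ℤ
  y : ℤ
  z : ℤ

namespace Heis

instance : Mul Heis := ⟨fun p q => ⟨p.x + q.x, p.y + q.y, p.z + q.z + p.x * q.y⟩⟩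
instance : One Heis := ⟨⟨0, 0, 0⟩⟩

/-- The generator `a`. -/
def a : Heis := ⟨1, 0, 0⟩

/-- The generator `b`. -/
def b : Heis := ⟨0, 1, 0⟩

/-- The generator corresponding to a letter: `false ↦ a`, `true ↦ b`. -/
def gen (t : Bool) : Heis := if t then b else a

/-- The position after `k` steps of the oriented path starting at the
identity and encoded by the binary word `α` (`false` = step by `a`,
`true` = step by `b`). -/
def walk (α : ℕ → Bool) : ℕ → Heis
  | 0 => 1
  | n + 1 => walk α n * gen (α n)

/-- The numerical value of the letter `α_j` (`a ↦ 0`, `b ↦ 1`). -/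
def val (α : ℕ → Bool) (j : ℕ) : ℕ := if α j then 1 else 0

end Heis

/-!
Every step by `a` raises the `x`-coordinate and every step by `b` raises the `y`-coordinate,
so after `k` steps of which `s` are `b`'s the path sits at `x = k - s`, `y = s`. A `b`-step taken
at time `j` adds the current `x`-coordinate `j - (number of earlier b's)` to `z`; summing over the
`s` letters `b` gives `z = ∑_{α_j = b} j - (0 + 1 + ⋯ + (s - 1)) = ∑_j j α_j - s(s-1)/2`.
Hence the endpoint determines, and is determined by, the two sums.
-/

namespace Heis

lemma mul_a (p : Heis) : p * a = ⟨p.x + 1, p.y, p.z⟩ := by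
  change (⟨p.x + 1, p.y + 0, p.z + 0 + p.x * 0⟩ : Heis) = _
  simp

lemma mul_b (p : Heis) : p * b = ⟨p.x, p.y + 1, p.z + p.x⟩ := by
  change (⟨p.x + 0, p.y + 1, p.z + 0 + p.x * 1⟩ : Heis) = _
  simp

def countB (α : ℕ → Bool) (k : ℕ) : ℕ := ∑ j ∈ Finset.range k, val α j

def indexSumB (α : ℕ → Bool) (k : ℕ) : ℕ := ∑ j ∈ Finset.range k, j * val α j

section

variable (α : ℕ → Bool) (n : ℕ)

lemma countB_succ : countB α (n + 1) = countB α n + val α n :=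
  Finset.sum_range_succ _ n

lemma indexSumB_succ : indexSumB α (n + 1) = indexSumB α n + n * val α n :=
  Finset.sum_range_succ _ n

lemma walk_eq_mk :
    walk α n = ⟨n - countB α n, countB α n, indexSumB α n - (countB α n).choose 2⟩ := by
  induction n with
  | zero => rfl
  | succ n ih =>
    rw [walk, ih, countB_succ, indexSumB_succ]
    cases h : α n
    · simp only [gen, val, h, mul_a, Bool.false_eq_true, if_false, add_zero, mul_zero]
      congr 1
      push_cast
      ring
    · simp only [gen, val, h, mul_b, if_true, mul_one, Nat.choose_succ_succ',
        Nat.choose_one_right]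
      congr 1 <;> push_cast <;> ring

end

end Heis

/-- Two oriented paths on the Cayley graph of the Heisenberg group encoded
by binary words `α, β` are at the same vertex after `k` steps if and only if
`∑_{j<k} α_j = ∑_{j<k} β_j` and `∑_{j<k} j·α_j = ∑_{j<k} j·β_j`. -/
theorem heisenberg_paths_meet_iff (k : ℕ) (α β : ℕ → Bool) :
    Heis.walk α k = Heis.walk β k ↔
      (∑ j ∈ Finset.range k, Heis.val α j = ∑ j ∈ Finset.range k, Heis.val β j) ∧
      (∑ j ∈ Finset.range k, j * Heis.val α j =
        ∑ j ∈ Finset.range k, j * Heis.val β j) := by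
  rw [Heis.walk_eq_mk, Heis.walk_eq_mk, Heis.mk.injEq]
  change _ ↔ Heis.countB α k = Heis.countB β k ∧ Heis.indexSumB α k = Heis.indexSumB β k
  constructor
  · rintro ⟨-, hcount, hz⟩
    have hcount : Heis.countB α k = Heis.countB β k := by exact_mod_cast hcount
    rw [hcount] at hz
    exact ⟨hcount, by exact_mod_cast sub_left_injective hz⟩
  · rintro ⟨hcount, hindex⟩
    simp only [hcount, hindex, and_self]
end

section
/- Let α_0, ..., α_{k-1} and β_0, ..., β_{k-1} be i.i.d. Bernoulli(1/2) random variables (all 2k variables independent). Then for every k ≥ 2, P[∑_{j<k} j·α_j = ∑_{j<k} j·β_j] ≤ 2/k. -/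
/-- The numerical value of the `j`-th letter of a word `α ∈ {0,1}^k`. -/
def bval {k : ℕ} (α : Fin k → Bool) (j : ℕ) : ℕ :=
  if h : j < k then (if α ⟨j, h⟩ then 1 else 0) else 0

open Finset

def wsum {k : ℕ} (α : Fin k → Bool) : ℕ := ∑ i : Fin k, if α i then (i:ℕ) else 0

lemma wsum_eq {k : ℕ} (α : Fin k → Bool) :
    ∑ j ∈ Finset.range k, j * bval α j = wsum α := by
  rw [wsum, ← Fin.sum_univ_eq_sum_range]
  refine Finset.sum_congr rfl fun i _ => ?_
  simp [bval, i.isLt, mul_ite]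

def bflip {k : ℕ} (α : Fin k → Bool) (j : Fin k) : Fin k → Bool :=
  Function.update α j (!α j)

lemma bflip_flip {k : ℕ} (α : Fin k → Bool) (j : Fin k) : bflip (bflip α j) j = α := by
  funext i
  by_cases h : i = j <;> simp [bflip, Function.update, h]

lemma g_flip {k : ℕ} (α : Fin k → Bool) (j : Fin k) :
    (fun i : Fin k => if bflip α j i then (i:ℕ) else 0)
      = Function.update (fun i : Fin k => if α i then (i:ℕ) else 0) j
          (if !α j then (j:ℕ) else 0) := by
  funext i
  by_cases h : i = j <;> simp [bflip, Function.update, h]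

lemma wsum_flip {k : ℕ} (α : Fin k → Bool) (j : Fin k) :
    wsum (bflip α j) = (if !α j then (j:ℕ) else 0) + ∑ i ∈ univ.erase j, (if α i then (i:ℕ) else 0) := by
  rw [wsum, g_flip]
  rw [Finset.sum_update_of_mem (mem_univ j)]
  rw [Finset.sdiff_singleton_eq_erase]

lemma wsum_split {k : ℕ} (α : Fin k → Bool) (j : Fin k) :
    wsum α = (if α j then (j:ℕ) else 0) + ∑ i ∈ univ.erase j, (if α i then (i:ℕ) else 0) := by
  rw [wsum, ← Finset.add_sum_erase _ _ (mem_univ j)]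


lemma wsum_bflip_false {k : ℕ} {α : Fin k → Bool} {j : Fin k} (h : α j = false) :
    wsum (bflip α j) = wsum α + j := by
  rw [wsum_flip, wsum_split α j, h]
  simp [add_comm, add_assoc, add_left_comm]

lemma wsum_bflip_true {k : ℕ} {α : Fin k → Bool} {j : Fin k} (h : α j = true) :
    wsum α = wsum (bflip α j) + j := by
  rw [wsum_flip, wsum_split α j, h]
  simp [add_comm, add_assoc, add_left_comm]

lemma fiber_bound (k : ℕ) (s : ℕ) :
    (univ.filter fun α : Fin k → Bool => wsum α = s).card * k ≤ 2 ^ k := by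
  set A := univ.filter fun α : Fin k → Bool => wsum α = s with hA
  have hcompl : (univ \ A).card = 2 ^ k - A.card := by
    rw [Finset.card_sdiff_of_subset (Finset.subset_univ A)]
    simp [Finset.card_univ]
  have hAle : A.card ≤ 2 ^ k := by
    calc A.card ≤ (univ : Finset (Fin k → Bool)).card := Finset.card_le_card (Finset.subset_univ A)
    _ = 2 ^ k := by simp [Finset.card_univ]
  set J := univ.filter fun j : Fin k => 0 < (j : ℕ) with hJ
  have hJcard : J.card = k - 1 := by
    have h1 : J.card + (univ.filter fun j : Fin k => ¬ 0 < (j : ℕ)).card = k := by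
      rw [Finset.card_filter_add_card_filter_not]
      simp [Finset.card_univ]
    rcases Nat.eq_zero_or_pos k with hk0 | hk0
    · subst hk0; simp [hJ]
    · have : (univ.filter fun j : Fin k => ¬ 0 < (j : ℕ)) = {⟨0, hk0⟩} := by
        ext j
        simp [Finset.mem_filter, Fin.ext_iff]
      rw [this] at h1
      simp at h1
      omega
  have key : ∀ (α : Fin k → Bool) (j : Fin k), wsum α = s → 0 < (j : ℕ) →
      (wsum (bflip α j) = s + j) ∨ (wsum (bflip α j) + j = s) := by
    intro α j hs hj
    cases hαj : α j with
    | false => exact Or.inl (by rw [wsum_bflip_false hαj, hs])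
    | true => exact Or.inr (by rw [← wsum_bflip_true hαj, hs])
  have hinj : ∀ p ∈ A ×ˢ J, ∀ q ∈ A ×ˢ J,
      bflip p.1 p.2 = bflip q.1 q.2 → p = q := by
    rintro ⟨α₁, j₁⟩ hp ⟨α₂, j₂⟩ hq h
    dsimp only at h
    simp only [Finset.mem_product, hA, hJ, Finset.mem_filter, Finset.mem_univ, true_and] at hp hq
    have k1 := key α₁ j₁ hp.1 hp.2
    have k2 := key α₂ j₂ hq.1 hq.2
    rw [h] at k1
    have hj12 : j₁ = j₂ := by
      apply Fin.ext
      rcases k1 with e1 | e1 <;> rcases k2 with e2 | e2 <;> omega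
    subst hj12
    have : α₁ = α₂ := by rw [← bflip_flip α₁ j₁, h, bflip_flip]
    simp [this]
  have himage : ∀ p ∈ A ×ˢ J, bflip p.1 p.2 ∈ univ \ A := by
    rintro ⟨α, j⟩ hp
    simp only [Finset.mem_product, hA, hJ, Finset.mem_filter, Finset.mem_univ, true_and] at hp
    simp only [Finset.mem_sdiff, Finset.mem_univ, true_and, hA, Finset.mem_filter, not_and]
    intro hws
    have := key α j hp.1 hp.2
    omega
  have hcard := Finset.card_le_card_of_injOn (fun p => bflip p.1 p.2) (fun p hp => himage p hp)
    (fun p hp q hq h => hinj p (by simpa using hp) q (by simpa using hq) h)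
  rw [Finset.card_product, hJcard, hcompl] at hcard
  rcases Nat.eq_zero_or_pos k with hk0 | hk0
  · subst hk0; simp
  · have : A.card * (k - 1) + A.card ≤ 2 ^ k := by omega
    have hk1 : A.card * (k - 1) + A.card = A.card * k := by
      have h' : k - 1 + 1 = k := Nat.succ_pred_eq_of_pos hk0
      calc A.card * (k - 1) + A.card = A.card * (k - 1 + 1) := by ring
      _ = A.card * k := by rw [h']
    omega

/-- For `α_0,…,α_{k-1}, β_0,…,β_{k-1}` i.i.d. Bernoulli(1/2) (modelled by the
uniform measure on pairs of words in `{0,1}^k`) and every `k ≥ 2`,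
`P[∑_{j<k} j·α_j = ∑_{j<k} j·β_j] ≤ 2/k`. -/
theorem weighted_sums_collision_bound (k : ℕ) (hk : 2 ≤ k) :
    (((Finset.univ.filter fun p : (Fin k → Bool) × (Fin k → Bool) =>
        ∑ j ∈ Finset.range k, j * bval p.1 j =
          ∑ j ∈ Finset.range k, j * bval p.2 j).card : ℝ)
      / (2 ^ k * 2 ^ k)) ≤ 2 / k := by
  have hfilt : (Finset.univ.filter fun p : (Fin k → Bool) × (Fin k → Bool) =>
        ∑ j ∈ Finset.range k, j * bval p.1 j = ∑ j ∈ Finset.range k, j * bval p.2 j)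
      = Finset.univ.filter fun p : (Fin k → Bool) × (Fin k → Bool) => wsum p.1 = wsum p.2 := by
    apply Finset.filter_congr
    intro p _
    rw [wsum_eq, wsum_eq]
  set S := Finset.univ.filter fun p : (Fin k → Bool) × (Fin k → Bool) => wsum p.1 = wsum p.2
    with hS
  have hsum : S.card = ∑ α : Fin k → Bool,
      (univ.filter fun β : Fin k → Bool => wsum β = wsum α).card := by
    rw [Finset.card_eq_sum_card_fiberwise (f := fun p => p.1) (t := univ)
      (fun p _ => Finset.mem_univ _)]
    refine Finset.sum_congr rfl fun α _ => ?_
    have : (S.filter fun p => p.1 = α)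
        = {α} ×ˢ (univ.filter fun β : Fin k → Bool => wsum β = wsum α) := by
      ext p
      simp only [hS, Finset.mem_filter, Finset.mem_product, Finset.mem_singleton,
        Finset.mem_univ, true_and]
      constructor
      · rintro ⟨h1, h2⟩; exact ⟨h2, by rw [← h2, ← h1]⟩
      · rintro ⟨h1, h2⟩; exact ⟨by rw [h1, h2], h1⟩
    rw [this, Finset.card_product, Finset.card_singleton, one_mul]
  have hcount : S.card * k ≤ 2 ^ k * 2 ^ k := by
    rw [hsum, Finset.sum_mul]
    calc (∑ α : Fin k → Bool, (univ.filter fun β : Fin k → Bool => wsum β = wsum α).card * k)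
        ≤ ∑ _α : Fin k → Bool, 2 ^ k :=
          Finset.sum_le_sum fun α _ => fiber_bound k (wsum α)
      _ = 2 ^ k * 2 ^ k := by
          rw [Finset.sum_const, Finset.card_univ]
          simp [mul_comm]
  rw [hfilt]
  have hkpos : (0 : ℝ) < k := by positivity
  have hden : (0 : ℝ) < 2 ^ k * 2 ^ k := by positivity
  rw [div_le_div_iff₀ hden hkpos]
  have : (S.card : ℝ) * k ≤ 2 ^ k * 2 ^ k := by
    calc (S.card : ℝ) * k = ((S.card * k : ℕ) : ℝ) := by push_cast; ring
    _ ≤ ((2 ^ k * 2 ^ k : ℕ) : ℝ) := by exact_mod_cast hcount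
    _ = 2 ^ k * 2 ^ k := by push_cast; ring
  nlinarith [this, hden.le]
end

section
/- There exists a constant c'' > 0 such that for all k ≥ 2 and all x ∈ [1/k, π/2], ∑_{j<k} f(jx)² ≥ c''·k, where f(x) = min{|x − jπ| : j ∈ ℤ}. -/
open scoped Real

/-- The distance from `x` to the nearest integer multiple of `π`. -/
noncomputable def distPiZ (x : ℝ) : ℝ :=
  Metric.infDist x {y : ℝ | ∃ j : ℤ, y = j * π}

lemma distPiZ_le (t : ℝ) (j : ℤ) : distPiZ t ≤ |t - j * π| := by
  have h : (j * π : ℝ) ∈ {y : ℝ | ∃ j : ℤ, y = j * π} := ⟨j, rfl⟩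
  simpa [distPiZ, Real.dist_eq] using Metric.infDist_le_dist_of_mem h

lemma le_distPiZ {b t : ℝ} (h : ∀ j : ℤ, b ≤ |t - j * π|) : b ≤ distPiZ t := by
  by_contra hlt
  push_neg at hlt
  rw [distPiZ] at hlt
  have hne : Set.Nonempty {y : ℝ | ∃ j : ℤ, y = j * π} := ⟨0, 0, by simp⟩
  obtain ⟨y, ⟨j, rfl⟩, hy⟩ := (Metric.infDist_lt_iff hne).1 hlt
  rw [Real.dist_eq] at hy
  exact absurd (h j) (not_le.mpr hy)

lemma distPiZ_eq (t : ℝ) : distPiZ t = |t - round (t / π) * π| := by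
  refine le_antisymm (distPiZ_le t _) (le_distPiZ fun j => ?_)
  have hπ : (0:ℝ) < π := Real.pi_pos
  have h := round_le (t / π) j
  have h2 : |t / π - round (t / π)| * π ≤ |t / π - j| * π :=
    mul_le_mul_of_nonneg_right h hπ.le
  have e1 : t - round (t / π) * π = (t / π - round (t / π)) * π := by field_simp
  have e2 : t - (j:ℝ) * π = (t / π - (j:ℝ)) * π := by field_simp
  calc |t - round (t / π) * π| = |t / π - round (t / π)| * π := by
        rw [e1, abs_mul, abs_of_pos hπ]
    _ ≤ |t / π - j| * π := h2
    _ = |t - j * π| := by rw [e2, abs_mul, abs_of_pos hπ]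

lemma distPiZ_nonneg (t : ℝ) : 0 ≤ distPiZ t := Metric.infDist_nonneg

lemma distPiZ_sub_le (a b : ℝ) : distPiZ (a - b) ≤ distPiZ a + distPiZ b := by
  rw [distPiZ_eq a, distPiZ_eq b]
  have h := distPiZ_le (a - b) (round (a / π) - round (b / π))
  refine h.trans ?_
  have heq : a - b - ((round (a / π) - round (b / π) : ℤ) : ℝ) * π
      = (a - round (a / π) * π) + -(b - round (b / π) * π) := by push_cast; ring
  rw [heq]
  calc |(a - round (a / π) * π) + -(b - round (b / π) * π)|
      ≤ |a - round (a / π) * π| + |-(b - round (b / π) * π)| := abs_add_le _ _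
    _ = |a - round (a / π) * π| + |b - round (b / π) * π| := by rw [abs_neg]

lemma distPiZ_ge_half {t : ℝ} (h1 : 1/2 ≤ t) (h2 : t ≤ π - 1/2) :
    1/2 ≤ distPiZ t := by
  refine le_distPiZ fun j => ?_
  have hπ : (0:ℝ) < π := Real.pi_pos
  rcases le_or_gt (j : ℝ) 0 with hj | hj
  · have : (j : ℝ) * π ≤ 0 := mul_nonpos_of_nonpos_of_nonneg hj hπ.le
    rw [abs_of_nonneg (by linarith)]; linarith
  · have hj1 : (1 : ℝ) ≤ (j : ℝ) := by exact_mod_cast hj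
    have : π ≤ (j : ℝ) * π := le_mul_of_one_le_left hπ.le hj1
    rw [abs_sub_comm, abs_of_nonneg (by linarith)]; linarith

/-- There is a constant `c'' > 0` such that for all `k ≥ 2` and all
`x ∈ [1/k, π/2]`, `∑_{j<k} f(jx)² ≥ c''·k`, where `f` is the distance to `πℤ`. -/
theorem sum_sq_dist_lower_bound :
    ∃ c'' > (0 : ℝ), ∀ k : ℕ, 2 ≤ k → ∀ x : ℝ,
      1 / k ≤ x → x ≤ π / 2 →
      c'' * k ≤ ∑ j ∈ Finset.range k, distPiZ (j * x) ^ 2 := by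
  refine ⟨1/64, by norm_num, ?_⟩
  intro k hk x hx1 hx2
  have hπ : (0:ℝ) < π := Real.pi_pos
  have hk0 : (0:ℝ) < (k:ℝ) := by positivity
  have hx0 : 0 < x := lt_of_lt_of_le (by positivity) hx1
  set m : ℕ := ⌈1/(2*x)⌉₊ with hm
  have hmge : 1/(2*x) ≤ (m:ℝ) := Nat.le_ceil _
  have hmlt : (m:ℝ) < 1/(2*x) + 1 := Nat.ceil_lt_add_one (by positivity)
  have hmx1 : 1/2 ≤ (m:ℝ) * x := by
    have := mul_le_mul_of_nonneg_right hmge hx0.le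
    calc (1:ℝ)/2 = 1/(2*x) * x := by field_simp
      _ ≤ (m:ℝ) * x := this
  have hmx2 : (m:ℝ) * x ≤ π - 1/2 := by
    have h1 : (m:ℝ) * x ≤ (1/(2*x) + 1) * x := mul_le_mul_of_nonneg_right hmlt.le hx0.le
    have h2 : (1/(2*x) + 1) * x = 1/2 + x := by field_simp
    have : (2:ℝ) ≤ π := by linarith [Real.pi_gt_three]
    nlinarith
  have hfm : 1/2 ≤ distPiZ ((m:ℝ) * x) := distPiZ_ge_half hmx1 hmx2
  have hkx : (1:ℝ) ≤ (k:ℝ) * x := by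
    have := mul_le_mul_of_nonneg_left hx1 hk0.le
    calc (1:ℝ) = (k:ℝ) * (1/(k:ℝ)) := by field_simp
      _ ≤ (k:ℝ) * x := this
  have h2x : 1/(2*x) ≤ (k:ℝ)/2 := by
    rw [div_le_div_iff₀ (by positivity) two_pos]
    nlinarith
  have hmk : 2 * m ≤ k + 1 := by
    have h2 : ((2 * m : ℕ) : ℝ) < ((k + 2 : ℕ) : ℝ) := by push_cast; linarith
    have := Nat.cast_lt.mp h2
    omega
  have hmlek : m ≤ k := by omega
  have key : ∀ j : ℕ, 1/8 ≤ distPiZ ((j:ℝ) * x) ^ 2 + distPiZ (((j+m:ℕ):ℝ) * x) ^ 2 := by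
    intro j
    have hsub : distPiZ ((m:ℝ) * x) ≤ distPiZ (((j+m:ℕ):ℝ) * x) + distPiZ ((j:ℝ) * x) := by
      have := distPiZ_sub_le (((j+m:ℕ):ℝ) * x) ((j:ℝ) * x)
      have heq : ((j+m:ℕ):ℝ) * x - (j:ℝ) * x = (m:ℝ) * x := by push_cast; ring
      rwa [heq] at this
    set a := distPiZ ((j:ℝ) * x)
    set b := distPiZ (((j+m:ℕ):ℝ) * x)
    have ha : 0 ≤ a := distPiZ_nonneg _
    have hb : 0 ≤ b := distPiZ_nonneg _
    have hab : 1/2 ≤ a + b := by linarith [hfm.trans hsub]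
    nlinarith [sq_nonneg (a - b)]
  have hsum : ∀ s : Finset ℕ, s ⊆ Finset.range k →
      ∑ j ∈ s, distPiZ ((j:ℝ) * x) ^ 2 ≤ ∑ j ∈ Finset.range k, distPiZ ((j:ℝ) * x) ^ 2 :=
    fun s hs => Finset.sum_le_sum_of_subset_of_nonneg hs (fun i _ _ => by positivity)
  have h1 : ((k - m : ℕ) : ℝ) * (1/8) ≤
      ∑ j ∈ Finset.range (k - m), (distPiZ ((j:ℝ) * x) ^ 2 + distPiZ (((j+m:ℕ):ℝ) * x) ^ 2) := by
    calc ((k-m : ℕ) : ℝ) * (1/8) = ∑ _j ∈ Finset.range (k-m), (1/8 : ℝ) := by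
          simp [Finset.sum_const, nsmul_eq_mul]
      _ ≤ _ := Finset.sum_le_sum (fun j _ => key j)
  have h2 : ∑ j ∈ Finset.range (k - m), (distPiZ ((j:ℝ) * x) ^ 2 + distPiZ (((j+m:ℕ):ℝ) * x) ^ 2)
      ≤ 2 * ∑ j ∈ Finset.range k, distPiZ ((j:ℝ) * x) ^ 2 := by
    rw [Finset.sum_add_distrib, two_mul]
    refine add_le_add (hsum _ (Finset.range_subset_range.mpr (Nat.sub_le k m))) ?_
    have hmap : ∑ j ∈ Finset.range (k - m), distPiZ (((j+m:ℕ):ℝ) * x) ^ 2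
        = ∑ j ∈ (Finset.range (k-m)).map (addRightEmbedding m), distPiZ ((j:ℝ) * x) ^ 2 := by
      rw [Finset.sum_map]; rfl
    rw [hmap]
    apply hsum
    intro i hi
    simp only [Finset.mem_map, Finset.mem_range, addRightEmbedding_apply] at hi
    obtain ⟨j, hj, rfl⟩ := hi
    exact Finset.mem_range.mpr (by omega)
  have hcount : (k:ℝ)/4 ≤ ((k - m : ℕ) : ℝ) := by
    have hn : k ≤ 4 * (k - m) := by omega
    have h4 : (k:ℝ) ≤ 4 * ((k - m : ℕ):ℝ) := by exact_mod_cast hn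
    linarith
  calc (1:ℝ)/64 * k = ((k:ℝ)/4 * (1/8)) / 2 := by ring
    _ ≤ (((k - m : ℕ):ℝ) * (1/8)) / 2 := by nlinarith
    _ ≤ ∑ j ∈ Finset.range k, distPiZ ((j:ℝ) * x) ^ 2 := by linarith
end

section
/- There exists a constant C > 0 such that for all k ≥ 1, ∫_{-π}^{π} ∏_{j<k} |cos(jx)| dx ≤ C·k^{−3/2}. -/
open scoped Real

namespace PAC

open Real Finset

lemma abs_cos_le (t : ℝ) : |Real.cos t| ≤ Real.exp (-(Real.sin t ^ 2) / 2) := by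
  have h1 : |Real.cos t| ^ 2 = 1 - Real.sin t ^ 2 := by rw [sq_abs, Real.cos_sq']
  have h2 : (1 : ℝ) - Real.sin t ^ 2 ≤ Real.exp (-(Real.sin t ^ 2)) := by
    have := Real.add_one_le_exp (-(Real.sin t ^ 2)); linarith
  have h3 : Real.exp (-(Real.sin t ^ 2)) = Real.exp (-(Real.sin t ^ 2) / 2) ^ 2 := by
    rw [← Real.exp_nat_mul]
    congr 1
    push_cast
    ring
  nlinarith [abs_nonneg (Real.cos t), Real.exp_pos (-(Real.sin t ^ 2) / 2)]

lemma sin_mul_sum_cos (k : ℕ) (t : ℝ) :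
    Real.sin t * ∑ j ∈ Finset.range k, Real.cos (2 * (j : ℝ) * t)
      = Real.sin (k * t) * Real.cos (((k : ℝ) - 1) * t) := by
  induction k with
  | zero => simp
  | succ n ih =>
    rw [Finset.sum_range_succ, mul_add, ih]
    push_cast
    have h1 : ((n : ℝ) + 1) * t = n * t + t := by ring
    have h2 : ((n : ℝ) + 1 - 1) * t = n * t := by ring
    have h3 : (2 * (n : ℝ)) * t = n * t + n * t := by ring
    have h4 : ((n : ℝ) - 1) * t = n * t - t := by ring
    rw [h1, h2, h3, h4, Real.sin_add, Real.cos_add, Real.cos_sub]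
    ring

lemma sum_sin_sq_ge (k : ℕ) (t : ℝ) (ht : 0 < Real.sin t) :
    (k : ℝ) / 2 - 1 / (2 * Real.sin t)
      ≤ ∑ j ∈ Finset.range k, Real.sin ((j : ℝ) * t) ^ 2 := by
  have h : ∑ j ∈ Finset.range k, Real.sin ((j : ℝ) * t) ^ 2
      = (k : ℝ) / 2 - (∑ j ∈ Finset.range k, Real.cos (2 * (j : ℝ) * t)) / 2 := by
    have : ∀ j ∈ Finset.range k,
        Real.sin ((j : ℝ) * t) ^ 2 = 1 / 2 - Real.cos (2 * (j : ℝ) * t) / 2 := by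
      intro j _
      rw [Real.sin_sq_eq_half_sub]; ring_nf
    rw [Finset.sum_congr rfl this, Finset.sum_sub_distrib, Finset.sum_const,
      Finset.card_range, ← Finset.sum_div]
    push_cast; ring
  have h2 : ∑ j ∈ Finset.range k, Real.cos (2 * (j : ℝ) * t) ≤ 1 / Real.sin t := by
    rw [le_div_iff₀ ht]
    have hident := sin_mul_sum_cos k t
    nlinarith [Real.neg_one_le_sin ((k : ℝ) * t), Real.sin_le_one ((k : ℝ) * t),
      Real.neg_one_le_cos (((k : ℝ) - 1) * t), Real.cos_le_one (((k : ℝ) - 1) * t)]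
  rw [h]
  have : 1 / (2 * Real.sin t) = (1 / Real.sin t) / 2 := by
    rw [div_div]; ring_nf
  rw [this]
  linarith

lemma sum_sq_eq (k : ℕ) :
    ∑ j ∈ Finset.range k, ((j : ℝ)) ^ 2 = k * (k - 1) * (2 * k - 1) / 6 := by
  induction k with
  | zero => simp
  | succ n ih =>
    rw [Finset.sum_range_succ, ih]
    push_cast; ring


-- Gaussian region: 0 ≤ u ≤ π/(2k), k ≥ 2
lemma sum_sin_sq_ge_gauss (k : ℕ) (hk : 2 ≤ k) (u : ℝ) (hu0 : 0 ≤ u)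
    (hu1 : u ≤ π / (2 * k)) :
    (k : ℝ) ^ 3 * u ^ 2 / (3 * π ^ 2)
      ≤ ∑ j ∈ Finset.range k, Real.sin ((j : ℝ) * u) ^ 2 := by
  have hπ : (0 : ℝ) < π := Real.pi_pos
  have hk1 : (2 : ℝ) ≤ (k : ℝ) := by exact_mod_cast hk
  have hstep : ∀ j ∈ Finset.range k,
      (2 / π) ^ 2 * ((j : ℝ) ^ 2 * u ^ 2) ≤ Real.sin ((j : ℝ) * u) ^ 2 := by
    intro j hj
    have hj' : (j : ℝ) ≤ (k : ℝ) - 1 := by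
      have : (j : ℕ) ≤ k - 1 := Nat.le_sub_one_of_lt (Finset.mem_range.mp hj)
      have hcast : ((k - 1 : ℕ) : ℝ) = (k : ℝ) - 1 := by
        have : 1 ≤ k := le_trans (by norm_num) hk
        push_cast [this]; ring
      calc (j : ℝ) ≤ ((k - 1 : ℕ) : ℝ) := by exact_mod_cast this
        _ = (k : ℝ) - 1 := hcast
    have hjn : (0 : ℝ) ≤ (j : ℝ) := Nat.cast_nonneg j
    have hju0 : 0 ≤ (j : ℝ) * u := mul_nonneg hjn hu0
    have hju1 : (j : ℝ) * u ≤ π / 2 := by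
      have h1 : (j : ℝ) * u ≤ ((k : ℝ) - 1) * (π / (2 * k)) :=
        mul_le_mul hj' hu1 hu0 (by linarith)
      have h2 : ((k : ℝ) - 1) * (π / (2 * k)) ≤ π / 2 := by
        rw [show ((k : ℝ) - 1) * (π / (2 * k)) = (((k : ℝ) - 1) * π) / (2 * k) from
          (mul_div_assoc _ _ _).symm]
        rw [div_le_div_iff₀ (by positivity) (by norm_num : (0:ℝ) < 2)]
        nlinarith
      linarith
    have := Real.mul_le_sin hju0 hju1
    have hsin : 0 ≤ 2 / π * ((j : ℝ) * u) := by positivity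
    nlinarith [this]
  have hsum := Finset.sum_le_sum hstep
  have hsq := sum_sq_eq k
  have : ∑ j ∈ Finset.range k, (2 / π) ^ 2 * ((j : ℝ) ^ 2 * u ^ 2)
      = (2 / π) ^ 2 * u ^ 2 * ((k : ℝ) * ((k : ℝ) - 1) * (2 * (k : ℝ) - 1) / 6) := by
    rw [← Finset.mul_sum]
    rw [show ∀ c : ℝ, ∑ j ∈ Finset.range k, ((j:ℝ)^2 * c) = (∑ j ∈ Finset.range k, (j:ℝ)^2) * c
        from fun c => by rw [← Finset.sum_mul]]
    rw [hsq]; ring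
  refine le_trans ?_ (le_trans (le_of_eq this.symm) hsum)
  rw [div_le_iff₀ (by positivity)]
  have hc : (2 / π) ^ 2 * u ^ 2 * ((k:ℝ) * ((k:ℝ) - 1) * (2 * (k:ℝ) - 1) / 6) * (3 * π ^ 2)
      = 2 * u ^ 2 * ((k:ℝ) * ((k:ℝ) - 1) * (2 * (k:ℝ) - 1)) := by
      field_simp; ring
  rw [hc]
  nlinarith [sq_nonneg u, mul_nonneg (sq_nonneg u) (sq_nonneg ((k:ℝ) - 2))]

-- Middle region: π/(2k) ≤ u ≤ π/2, k ≥ 100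
lemma sum_sin_sq_ge_mid (k : ℕ) (hk : 100 ≤ k) (u : ℝ) (hu0 : π / (2 * k) ≤ u)
    (hu1 : u ≤ π / 2) :
    (k : ℝ) / 16 ≤ ∑ j ∈ Finset.range k, Real.sin ((j : ℝ) * u) ^ 2 := by
  have hπ : (0 : ℝ) < π := Real.pi_pos
  have hπ' : 3.141592 < π := Real.pi_gt_d6
  have hπ'' : π < 3.15 := by
    have := Real.pi_lt_d2
    linarith
  have hk1 : (100 : ℝ) ≤ (k : ℝ) := by exact_mod_cast hk
  have hu0' : 0 < u := lt_of_lt_of_le (by positivity) hu0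
  have hsinu : 0 < Real.sin u :=
    Real.sin_pos_of_pos_of_lt_pi hu0' (lt_of_le_of_lt hu1 (by linarith))
  have key : 1 / (2 * Real.sin u) ≤ 7 * (k : ℝ) / 16 := by
    rcases le_or_gt u 1 with hcase | hcase
    · have hs : (3 / 4) * u ≤ Real.sin u := by
        have h := Real.sin_gt_sub_cube hu0'
        nlinarith [mul_nonneg (mul_nonneg hu0'.le hu0'.le) (sub_nonneg.mpr hcase)]
      have hlb : 3 * π / (8 * k) ≤ Real.sin u := by
        have : 3 * π / (8 * (k : ℝ)) = (3 / 4) * (π / (2 * k)) := by ring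
        rw [this]
        exact le_trans (by nlinarith) hs
      have h8k : (0 : ℝ) < 8 * k := by positivity
      have hlb0 : (0 : ℝ) < 3 * π / (8 * k) := by positivity
      have := one_div_le_one_div_of_le hlb0 hlb
      calc 1 / (2 * Real.sin u) ≤ 1 / (2 * (3 * π / (8 * (k : ℝ)))) := by
            apply one_div_le_one_div_of_le (by positivity)
            nlinarith
        _ = 4 * (k : ℝ) / (3 * π) := by field_simp; ring
        _ ≤ 7 * (k : ℝ) / 16 := by
            rw [div_le_div_iff₀ (by positivity) (by norm_num)]
            nlinarith
    · have hs : 2 / π * u ≤ Real.sin u := Real.mul_le_sin (le_of_lt hu0') hu1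
      have hlb : 2 / π ≤ Real.sin u :=
        le_trans (le_mul_of_one_le_right (by positivity) hcase.le) hs
      calc 1 / (2 * Real.sin u) ≤ 1 / (2 * (2 / π)) := by
            apply one_div_le_one_div_of_le (by positivity)
            nlinarith
        _ = π / 4 := by rw [show (2:ℝ) * (2 / π) = 4 / π by ring, one_div_div]
        _ ≤ 7 * (k : ℝ) / 16 := by linarith
  have := sum_sin_sq_ge k u hsinu
  linarith

-- product bound
lemma prod_le_exp (k : ℕ) (u : ℝ) :
    ∏ j ∈ Finset.range k, |Real.cos ((j : ℝ) * u)|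
      ≤ Real.exp (-(∑ j ∈ Finset.range k, Real.sin ((j : ℝ) * u) ^ 2) / 2) := by
  have h : ∀ j ∈ Finset.range k,
      |Real.cos ((j : ℝ) * u)| ≤ Real.exp (-(Real.sin ((j : ℝ) * u) ^ 2) / 2) :=
    fun j _ => abs_cos_le _
  calc ∏ j ∈ Finset.range k, |Real.cos ((j : ℝ) * u)|
      ≤ ∏ j ∈ Finset.range k, Real.exp (-(Real.sin ((j : ℝ) * u) ^ 2) / 2) :=
        Finset.prod_le_prod (fun j _ => abs_nonneg _) h
    _ = Real.exp (∑ j ∈ Finset.range k, (-(Real.sin ((j : ℝ) * u) ^ 2) / 2)) :=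
        (Real.exp_sum _ _).symm
    _ = Real.exp (-(∑ j ∈ Finset.range k, Real.sin ((j : ℝ) * u) ^ 2) / 2) := by
        congr 1
        rw [← Finset.sum_div, ← Finset.sum_neg_distrib]

-- core: u ∈ [0, π/2]
lemma core (k : ℕ) (hk : 100 ≤ k) (u : ℝ) (hu0 : 0 ≤ u) (hu1 : u ≤ π / 2) :
    ∏ j ∈ Finset.range k, |Real.cos ((j : ℝ) * u)|
      ≤ Real.exp (-((k : ℝ) ^ 3 / (6 * π ^ 2)) * u ^ 2) + Real.exp (-(k : ℝ) / 32) := by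
  have hP := prod_le_exp k u
  rcases le_or_gt u (π / (2 * k)) with hcase | hcase
  · have hS := sum_sin_sq_ge_gauss k (le_trans (by norm_num) hk) u hu0 hcase
    have : Real.exp (-(∑ j ∈ Finset.range k, Real.sin ((j : ℝ) * u) ^ 2) / 2)
        ≤ Real.exp (-((k : ℝ) ^ 3 / (6 * π ^ 2)) * u ^ 2) := by
      apply Real.exp_le_exp.mpr
      have hπ : (0 : ℝ) < π := Real.pi_pos
      have hπ0 : π ≠ 0 := ne_of_gt hπ
      have heq : -((k : ℝ) ^ 3 / (6 * π ^ 2)) * u ^ 2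
          = -((k : ℝ) ^ 3 * u ^ 2 / (3 * π ^ 2)) / 2 := by
        ring_nf
      rw [heq]
      linarith
    have := le_trans hP this
    linarith [Real.exp_pos (-(k : ℝ) / 32)]
  · have hS := sum_sin_sq_ge_mid k hk u (le_of_lt hcase) hu1
    have : Real.exp (-(∑ j ∈ Finset.range k, Real.sin ((j : ℝ) * u) ^ 2) / 2)
        ≤ Real.exp (-(k : ℝ) / 32) := by
      apply Real.exp_le_exp.mpr
      rw [show -(k : ℝ) / 32 = -((k : ℝ) / 16) / 2 by ring]
      linarith
    have := le_trans hP this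
    linarith [Real.exp_pos (-((k : ℝ) ^ 3 / (6 * π ^ 2)) * u ^ 2)]


lemma abs_cos_pi_sub (j : ℕ) (u : ℝ) :
    |Real.cos ((j : ℝ) * (π - u))| = |Real.cos ((j : ℝ) * u)| := by
  rw [show (j : ℝ) * (π - u) = (j : ℝ) * π - (j : ℝ) * u by ring,
    Real.cos_nat_mul_pi_sub]
  rw [abs_mul, abs_pow, abs_neg, abs_one, one_pow, one_mul]

lemma core2 (k : ℕ) (hk : 100 ≤ k) (y : ℝ) (hy0 : 0 ≤ y) (hy1 : y ≤ π) :
    ∏ j ∈ Finset.range k, |Real.cos ((j : ℝ) * y)|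
      ≤ Real.exp (-((k : ℝ) ^ 3 / (6 * π ^ 2)) * y ^ 2)
        + Real.exp (-((k : ℝ) ^ 3 / (6 * π ^ 2)) * (y - π) ^ 2)
        + Real.exp (-(k : ℝ) / 32) := by
  rcases le_or_gt y (π / 2) with hcase | hcase
  · have := core k hk y hy0 hcase
    linarith [Real.exp_pos (-((k : ℝ) ^ 3 / (6 * π ^ 2)) * (y - π) ^ 2)]
  · set u := π - y with hu
    have hu0 : 0 ≤ u := by rw [hu]; linarith
    have hu1 : u ≤ π / 2 := by rw [hu]; linarith
    have hprod : ∏ j ∈ Finset.range k, |Real.cos ((j : ℝ) * y)|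
        = ∏ j ∈ Finset.range k, |Real.cos ((j : ℝ) * u)| := by
      refine Finset.prod_congr rfl (fun j _ => ?_)
      rw [show (j : ℝ) * y = (j : ℝ) * (π - u) by rw [hu]; ring, abs_cos_pi_sub]
    have hsq : u ^ 2 = (y - π) ^ 2 := by rw [hu]; ring
    have := core k hk u hu0 hu1
    rw [← hprod, hsq] at this
    linarith [Real.exp_pos (-((k : ℝ) ^ 3 / (6 * π ^ 2)) * y ^ 2)]

lemma pointwise (k : ℕ) (hk : 100 ≤ k) (x : ℝ) (hx : -π ≤ x) (hx' : x ≤ π) :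
    ∏ j ∈ Finset.range k, |Real.cos ((j : ℝ) * x)|
      ≤ Real.exp (-((k : ℝ) ^ 3 / (6 * π ^ 2)) * x ^ 2)
        + Real.exp (-((k : ℝ) ^ 3 / (6 * π ^ 2)) * (x - π) ^ 2)
        + Real.exp (-((k : ℝ) ^ 3 / (6 * π ^ 2)) * (x + π) ^ 2)
        + Real.exp (-(k : ℝ) / 32) := by
  rcases le_or_gt 0 x with hcase | hcase
  · have := core2 k hk x hcase hx'
    linarith [Real.exp_pos (-((k : ℝ) ^ 3 / (6 * π ^ 2)) * (x + π) ^ 2)]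
  · set y := -x with hy
    have hy0 : 0 ≤ y := by rw [hy]; linarith
    have hy1 : y ≤ π := by rw [hy]; linarith
    have hprod : ∏ j ∈ Finset.range k, |Real.cos ((j : ℝ) * x)|
        = ∏ j ∈ Finset.range k, |Real.cos ((j : ℝ) * y)| := by
      refine Finset.prod_congr rfl (fun j _ => ?_)
      rw [show (j : ℝ) * x = -((j : ℝ) * y) by rw [hy]; ring, Real.cos_neg]
    have hsq1 : y ^ 2 = x ^ 2 := by rw [hy]; ring
    have hsq2 : (y - π) ^ 2 = (x + π) ^ 2 := by rw [hy]; ring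
    have := core2 k hk y hy0 hy1
    rw [← hprod, hsq1, hsq2] at this
    linarith [Real.exp_pos (-((k : ℝ) ^ 3 / (6 * π ^ 2)) * (x - π) ^ 2)]

lemma gauss_piece {b : ℝ} (hb : 0 < b) (a₁ a₂ : ℝ) (h : a₁ ≤ a₂) :
    ∫ x in a₁..a₂, Real.exp (-b * x ^ 2) ≤ Real.sqrt (π / b) := by
  rw [intervalIntegral.integral_of_le h]
  calc ∫ x in Set.Ioc a₁ a₂, Real.exp (-b * x ^ 2)
      ≤ ∫ x : ℝ, Real.exp (-b * x ^ 2) := by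
        apply MeasureTheory.setIntegral_le_integral (integrable_exp_neg_mul_sq hb)
        filter_upwards with x using (Real.exp_pos _).le
    _ = Real.sqrt (π / b) := integral_gaussian b

end PAC


open PAC in
set_option maxHeartbeats 2000000 in
/-- There is a constant `C > 0` such that for all `k ≥ 1`,
`∫_{-π}^{π} ∏_{j<k} |cos(jx)| dx ≤ C·k^{−3/2}`. -/
theorem integral_prod_abs_cos_bound :
    ∃ C > (0 : ℝ), ∀ k : ℕ, 1 ≤ k →
      (∫ x in (-π : ℝ)..π, ∏ j ∈ Finset.range k, |Real.cos (j * x)|) ≤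
        C * (k : ℝ) ^ (-(3 : ℝ) / 2) := by
  refine ⟨200000, by norm_num, fun k hk => ?_⟩
  have hπ : (0 : ℝ) < π := Real.pi_pos
  have hπ15 : π < 3.15 := by have := Real.pi_lt_d2; linarith
  have hkpos : (0 : ℝ) < (k : ℝ) := by exact_mod_cast hk
  have hkR : (1 : ℝ) ≤ (k : ℝ) := by exact_mod_cast hk
  have hrpow : (k : ℝ) ^ (-(3 : ℝ) / 2) = ((k : ℝ) ^ ((3 : ℝ) / 2))⁻¹ := by
    rw [show (-(3 : ℝ) / 2) = -((3 : ℝ) / 2) by ring, Real.rpow_neg hkpos.le]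
  have hk32pos : (0 : ℝ) < (k : ℝ) ^ ((3 : ℝ) / 2) := Real.rpow_pos_of_pos hkpos _
  have hk2 : (k : ℝ) ^ ((3 : ℝ) / 2) ≤ (k : ℝ) ^ 2 := by
    have h := Real.rpow_le_rpow_of_exponent_le hkR (by norm_num : (3 : ℝ) / 2 ≤ 2)
    rwa [show ((2 : ℝ)) = ((2 : ℕ) : ℝ) by norm_num, Real.rpow_natCast] at h
  have hfcont : Continuous fun x : ℝ => ∏ j ∈ Finset.range k, |Real.cos ((j : ℝ) * x)| :=
    continuous_finset_prod _ fun j _ =>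
      (Real.continuous_cos.comp (continuous_const.mul continuous_id)).abs
  rw [hrpow]
  rcases lt_or_ge k 100 with hk100 | hk100
  · -- small k
    have h1 : (∫ x in (-π : ℝ)..π, ∏ j ∈ Finset.range k, |Real.cos ((j : ℝ) * x)|)
        ≤ ∫ _x in (-π : ℝ)..π, (1 : ℝ) := by
      apply intervalIntegral.integral_mono_on (by linarith)
        (hfcont.intervalIntegrable _ _) intervalIntegrable_const
      intro x _
      exact Finset.prod_le_one (fun j _ => abs_nonneg _) (fun j _ => Real.abs_cos_le_one _)
    rw [intervalIntegral.integral_const, smul_eq_mul, mul_one] at h1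
    have hk99 : (k : ℝ) ≤ 99 := by
      have : k ≤ 99 := Nat.lt_succ_iff.mp hk100
      exact_mod_cast this
    have h2 : (k : ℝ) ^ ((3 : ℝ) / 2) ≤ 9801 := le_trans hk2 (by nlinarith)
    have h3 : (9801 : ℝ)⁻¹ ≤ ((k : ℝ) ^ ((3 : ℝ) / 2))⁻¹ := inv_anti₀ hk32pos h2
    calc (∫ x in (-π : ℝ)..π, ∏ j ∈ Finset.range k, |Real.cos ((j : ℝ) * x)|)
        ≤ π - -π := h1
      _ ≤ 20 := by linarith
      _ = 200000 * (10000 : ℝ)⁻¹ := by norm_num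
      _ ≤ 200000 * (9801 : ℝ)⁻¹ := by
          have : (9801 : ℝ)⁻¹ ≥ (10000 : ℝ)⁻¹ := inv_anti₀ (by norm_num) (by norm_num)
          linarith
      _ ≤ 200000 * ((k : ℝ) ^ ((3 : ℝ) / 2))⁻¹ := by linarith
  · -- large k
    set b : ℝ := (k : ℝ) ^ 3 / (6 * π ^ 2) with hbdef
    have hb : 0 < b := div_pos (pow_pos hkpos 3) (by positivity)
    have c1 : Continuous fun x : ℝ => Real.exp (-b * x ^ 2) :=
      Real.continuous_exp.comp (continuous_const.mul (continuous_pow 2))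
    have c2 : Continuous fun x : ℝ => Real.exp (-b * (x - π) ^ 2) :=
      Real.continuous_exp.comp
        (continuous_const.mul ((continuous_id.sub continuous_const).pow 2))
    have c3 : Continuous fun x : ℝ => Real.exp (-b * (x + π) ^ 2) :=
      Real.continuous_exp.comp
        (continuous_const.mul ((continuous_id.add continuous_const).pow 2))
    have hgcont : Continuous fun x : ℝ =>
        Real.exp (-b * x ^ 2) + Real.exp (-b * (x - π) ^ 2)
          + Real.exp (-b * (x + π) ^ 2) + Real.exp (-(k : ℝ) / 32) :=
      ((c1.add c2).add c3).add continuous_const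
    have hmono : (∫ x in (-π : ℝ)..π, ∏ j ∈ Finset.range k, |Real.cos ((j : ℝ) * x)|)
        ≤ ∫ x in (-π : ℝ)..π,
            (Real.exp (-b * x ^ 2) + Real.exp (-b * (x - π) ^ 2)
              + Real.exp (-b * (x + π) ^ 2) + Real.exp (-(k : ℝ) / 32)) := by
      apply intervalIntegral.integral_mono_on (by linarith)
        (hfcont.intervalIntegrable _ _) (hgcont.intervalIntegrable _ _)
      intro x hx
      have hpt := pointwise k hk100 x hx.1 hx.2
      rw [hbdef]
      convert hpt using 3 <;> ring
    have hsplit : (∫ x in (-π : ℝ)..π,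
            (Real.exp (-b * x ^ 2) + Real.exp (-b * (x - π) ^ 2)
              + Real.exp (-b * (x + π) ^ 2) + Real.exp (-(k : ℝ) / 32)))
        = (∫ x in (-π : ℝ)..π, Real.exp (-b * x ^ 2))
          + (∫ x in (-π : ℝ)..π, Real.exp (-b * (x - π) ^ 2))
          + (∫ x in (-π : ℝ)..π, Real.exp (-b * (x + π) ^ 2))
          + (∫ _x in (-π : ℝ)..π, Real.exp (-(k : ℝ) / 32)) := by
      rw [intervalIntegral.integral_add
          (((c1.intervalIntegrable _ _).add (c2.intervalIntegrable _ _)).add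
            (c3.intervalIntegrable _ _)) (intervalIntegrable_const),
        intervalIntegral.integral_add
          ((c1.intervalIntegrable _ _).add (c2.intervalIntegrable _ _))
          (c3.intervalIntegrable _ _),
        intervalIntegral.integral_add (c1.intervalIntegrable _ _)
          (c2.intervalIntegrable _ _)]
    have hI1 : (∫ x in (-π : ℝ)..π, Real.exp (-b * x ^ 2)) ≤ Real.sqrt (π / b) :=
      gauss_piece hb _ _ (by linarith)
    have hI2 : (∫ x in (-π : ℝ)..π, Real.exp (-b * (x - π) ^ 2)) ≤ Real.sqrt (π / b) := by
      rw [intervalIntegral.integral_comp_sub_right (fun x => Real.exp (-b * x ^ 2)) π]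
      exact gauss_piece hb _ _ (by linarith)
    have hI3 : (∫ x in (-π : ℝ)..π, Real.exp (-b * (x + π) ^ 2)) ≤ Real.sqrt (π / b) := by
      rw [intervalIntegral.integral_comp_add_right (fun x => Real.exp (-b * x ^ 2)) π]
      exact gauss_piece hb _ _ (by linarith)
    have hI4 : (∫ _x in (-π : ℝ)..π, Real.exp (-(k : ℝ) / 32))
        = 2 * π * Real.exp (-(k : ℝ) / 32) := by
      rw [intervalIntegral.integral_const, smul_eq_mul]; ring
    have hsqrt : Real.sqrt (π / b) ≤ 14 * ((k : ℝ) ^ ((3 : ℝ) / 2))⁻¹ := by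
      have hπ0 : π ≠ 0 := ne_of_gt hπ
      have hk0 : (k : ℝ) ≠ 0 := ne_of_gt hkpos
      have hpb : π / b = 6 * π ^ 3 / (k : ℝ) ^ 3 := by
        rw [hbdef]; field_simp
      rw [hpb, Real.sqrt_div (by positivity)]
      have hπ2 : π ^ 2 < 9.9225 := by nlinarith
      have hπ3 : π ^ 3 < 32 := by nlinarith
      have h1 : Real.sqrt (6 * π ^ 3) ≤ 14 := by
        have hle : (6 : ℝ) * π ^ 3 ≤ 196 := by nlinarith
        calc Real.sqrt (6 * π ^ 3) ≤ Real.sqrt 196 := Real.sqrt_le_sqrt hle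
          _ = 14 := by
              rw [show (196 : ℝ) = 14 ^ 2 by norm_num,
                Real.sqrt_sq (by norm_num : (0 : ℝ) ≤ 14)]
      have h2 : Real.sqrt ((k : ℝ) ^ 3) = (k : ℝ) ^ ((3 : ℝ) / 2) := by
        rw [show ((k : ℝ) ^ 3) = (k : ℝ) ^ ((3 : ℕ) : ℝ) from (Real.rpow_natCast _ 3).symm,
          Real.sqrt_eq_rpow, ← Real.rpow_mul hkpos.le]
        norm_num
      rw [h2, div_eq_mul_inv]
      exact mul_le_mul_of_nonneg_right h1 (by positivity)
    have hexp : Real.exp (-(k : ℝ) / 32) ≤ 4096 * ((k : ℝ) ^ ((3 : ℝ) / 2))⁻¹ := by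
      have e2 : ((k : ℝ) / 64) ^ 2 ≤ Real.exp ((k : ℝ) / 32) := by
        rw [show (k : ℝ) / 32 = (k : ℝ) / 64 + (k : ℝ) / 64 by ring, Real.exp_add]
        nlinarith [Real.add_one_le_exp ((k : ℝ) / 64), hkpos]
      have e3 : Real.exp (-(k : ℝ) / 32) ≤ 4096 / (k : ℝ) ^ 2 := by
        rw [show -(k : ℝ) / 32 = -((k : ℝ) / 32) by ring, Real.exp_neg]
        have hpos : (0 : ℝ) < ((k : ℝ) / 64) ^ 2 := by positivity
        calc (Real.exp ((k : ℝ) / 32))⁻¹ ≤ (((k : ℝ) / 64) ^ 2)⁻¹ :=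
              inv_anti₀ hpos e2
          _ = 4096 / (k : ℝ) ^ 2 := by rw [div_pow, inv_div]; norm_num
      have e4 : (4096 : ℝ) / (k : ℝ) ^ 2 ≤ 4096 * ((k : ℝ) ^ ((3 : ℝ) / 2))⁻¹ := by
        rw [div_eq_mul_inv]
        have h5 : ((k : ℝ) ^ 2)⁻¹ ≤ ((k : ℝ) ^ ((3 : ℝ) / 2))⁻¹ :=
          inv_anti₀ hk32pos hk2
        linarith
      linarith
    have hkinv : (0 : ℝ) ≤ ((k : ℝ) ^ ((3 : ℝ) / 2))⁻¹ := by positivity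
    have hlast : 2 * π * Real.exp (-(k : ℝ) / 32)
        ≤ 25805 * ((k : ℝ) ^ ((3 : ℝ) / 2))⁻¹ := by
      have h1 : 2 * π * Real.exp (-(k : ℝ) / 32)
          ≤ 2 * π * (4096 * ((k : ℝ) ^ ((3 : ℝ) / 2))⁻¹) :=
        mul_le_mul_of_nonneg_left hexp (by positivity)
      have h2 : 2 * π * (4096 * ((k : ℝ) ^ ((3 : ℝ) / 2))⁻¹)
          = (8192 * π) * ((k : ℝ) ^ ((3 : ℝ) / 2))⁻¹ := by ring
      have h3 : (8192 : ℝ) * π ≤ 25805 := by linarith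
      have h4 : (8192 * π) * ((k : ℝ) ^ ((3 : ℝ) / 2))⁻¹
          ≤ 25805 * ((k : ℝ) ^ ((3 : ℝ) / 2))⁻¹ :=
        mul_le_mul_of_nonneg_right h3 hkinv
      linarith
    calc (∫ x in (-π : ℝ)..π, ∏ j ∈ Finset.range k, |Real.cos ((j : ℝ) * x)|)
        ≤ _ := hmono
      _ = _ := hsplit
      _ ≤ Real.sqrt (π / b) + Real.sqrt (π / b) + Real.sqrt (π / b)
            + 2 * π * Real.exp (-(k : ℝ) / 32) := by
          rw [hI4]; linarith
      _ ≤ 14 * ((k : ℝ) ^ ((3 : ℝ) / 2))⁻¹ + 14 * ((k : ℝ) ^ ((3 : ℝ) / 2))⁻¹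
            + 14 * ((k : ℝ) ^ ((3 : ℝ) / 2))⁻¹ + 25805 * ((k : ℝ) ^ ((3 : ℝ) / 2))⁻¹ := by
          linarith
      _ ≤ 200000 * ((k : ℝ) ^ ((3 : ℝ) / 2))⁻¹ := by linarith
end

section
/- Let α_0, ..., α_{k-1} be i.i.d. Bernoulli(1/2) random variables. There exists C > 0 such that for all k ≥ 1 and all integers n, P[∑_{j<k} j·α_j = n] ≤ C·k^{−3/2}. -/
open Real Finset intervalIntegral MeasureTheory

lemma exp_int_pi (m : ℤ) : Complex.exp (m * Complex.I * (π:ℝ)) = (-1 : ℂ) ^ m := by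
  rw [show (m : ℂ) * Complex.I * (π:ℝ) = m * ((π:ℝ) * Complex.I) by ring,
    Complex.exp_int_mul, Complex.exp_pi_mul_I]

lemma integral_exp_int (m : ℤ) :
    (∫ x : ℝ in (-π)..π, Complex.exp (m * x * Complex.I)) =
      if m = 0 then (2 * π : ℝ) else 0 := by
  rcases eq_or_ne m 0 with h | h
  · simp [h, two_mul]
  · have hc : (m : ℂ) * Complex.I ≠ 0 := by
      simp [Complex.ext_iff, h]
    have key := integral_exp_mul_complex (a := -π) (b := π) hc
    simp only [h, if_neg]
    have heq : (fun x : ℝ => Complex.exp (m * x * Complex.I)) =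
        fun x : ℝ => Complex.exp ((m * Complex.I) * x) := by
      funext x; ring_nf
    have hmul : ((-1:ℂ)) ^ m * ((-1:ℂ)) ^ m = 1 := by
      rw [← mul_zpow]; norm_num
    have h2 : Complex.exp ((m : ℂ) * Complex.I * ((-π : ℝ) : ℂ)) = (-1 : ℂ) ^ m := by
      rw [show ((m : ℂ) * Complex.I * ((-π:ℝ):ℂ)) = ((-m : ℤ) : ℂ) * Complex.I * (π:ℝ) by
        push_cast; ring, exp_int_pi, zpow_neg, inv_eq_of_mul_eq_one_right hmul]
    rw [heq, key, exp_int_pi, h2, sub_self, zero_div]; simp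

lemma prod_expand (k : ℕ) (x : ℝ) :
    (∏ j ∈ Finset.range k, (1 + Complex.exp (j * x * Complex.I))) =
      ∑ α : Fin k → Bool,
        Complex.exp (((∑ j ∈ Finset.range k, j * bval α j : ℤ) : ℂ) * x * Complex.I) := by
  have h1 : (∏ j ∈ Finset.range k, (1 + Complex.exp (j * x * Complex.I))) =
      ∏ i : Fin k, ∑ b : Bool, (if b then Complex.exp (i * x * Complex.I) else 1) := by
    rw [← Fin.prod_univ_eq_prod_range]
    refine Finset.prod_congr rfl fun i _ => ?_
    simp [Fintype.sum_bool, add_comm]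
  rw [h1, Fintype.prod_sum]
  refine Finset.sum_congr rfl fun α _ => ?_
  have h2 : ∀ i : Fin k, (if α i then Complex.exp (i * x * Complex.I) else 1) =
      Complex.exp (((i : ℕ) * bval α i : ℤ) * x * Complex.I) := by
    intro i
    rcases hb : α i with _ | _
    · simp [bval, i.isLt, hb]
    · simp [bval, i.isLt, hb, Fin.eta]
  simp only [h2, ← Complex.exp_sum]
  congr 1
  rw [← Finset.sum_mul, ← Finset.sum_mul]
  congr 1
  push_cast
  rw [Fin.sum_univ_eq_sum_range (fun j => (j : ℂ) * (bval α j : ℂ))]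

lemma count_eq (k : ℕ) (n : ℤ) :
    ((Finset.univ.filter fun α : Fin k → Bool =>
        (∑ j ∈ Finset.range k, j * bval α j : ℤ) = n).card : ℂ) * ((2 * π : ℝ) : ℂ) =
    ∫ x : ℝ in (-π)..π,
      (∏ j ∈ Finset.range k, (1 + Complex.exp (j * x * Complex.I))) *
        Complex.exp (-n * x * Complex.I) := by
  have hint : ∀ x : ℝ,
      (∏ j ∈ Finset.range k, (1 + Complex.exp (j * x * Complex.I))) *
        Complex.exp (-n * x * Complex.I) =
      ∑ α : Fin k → Bool,
        Complex.exp ((((∑ j ∈ Finset.range k, j * bval α j : ℤ) - n : ℤ) : ℂ) * x *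
          Complex.I) := by
    intro x
    rw [prod_expand, Finset.sum_mul]
    refine Finset.sum_congr rfl fun α _ => ?_
    rw [← Complex.exp_add]
    congr 1
    push_cast
    ring
  simp only [hint]
  rw [intervalIntegral.integral_finset_sum (fun α _ => by
    apply Continuous.intervalIntegrable; fun_prop)]
  simp only [integral_exp_int, sub_eq_zero]
  rw [show (fun x : Fin k → Bool => ((if ∑ j ∈ Finset.range k, (j:ℤ) * (bval x j) = n then 2 * π else 0 : ℝ) : ℂ)) = fun x : Fin k → Bool => (if ∑ j ∈ Finset.range k, (j:ℤ) * (bval x j) = n then ((2 * π : ℝ):ℂ) else 0) from funext fun x => by split <;> simp]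
  rw [Finset.sum_ite, Finset.sum_const, Finset.sum_const]
  simp [mul_comm]

lemma norm_one_add_exp (θ : ℝ) :
    ‖1 + Complex.exp (θ * Complex.I)‖ = 2 * |Real.cos (θ / 2)| := by
  have h : (1 : ℂ) + Complex.exp (θ * Complex.I) =
      Complex.exp ((θ / 2 : ℝ) * Complex.I) * (2 * Real.cos (θ / 2)) := by
    rw [Complex.exp_mul_I, Complex.exp_mul_I]
    rw [show (θ : ℂ) = ((θ/2 : ℝ) : ℂ) + ((θ/2 : ℝ) : ℂ) by push_cast; ring]
    rw [Complex.cos_add, Complex.sin_add, Complex.ofReal_cos]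
    push_cast
    linear_combination -Complex.sin_sq_add_cos_sq ((θ:ℂ)/2)
  rw [h, norm_mul, Complex.norm_exp]
  simp only [norm_mul, Complex.norm_exp]
  rw [show ((θ/2:ℝ) : ℂ) * Complex.I = Complex.I * ((θ/2:ℝ):ℂ) by ring]
  simp [Complex.norm_real, abs_mul, abs_of_nonneg (by norm_num : (0:ℝ) ≤ 2)]
  rw [show ((θ:ℂ)/2) = ((θ/2:ℝ):ℂ) by push_cast; ring, ← Complex.ofReal_cos,
    Complex.norm_real, Real.norm_eq_abs]

noncomputable def G (k : ℕ) (x : ℝ) : ℝ := ∏ j ∈ Finset.range k, |Real.cos (j * x / 2)|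

lemma count_le_integral (k : ℕ) (n : ℤ) :
    ((Finset.univ.filter fun α : Fin k → Bool =>
        (∑ j ∈ Finset.range k, j * bval α j : ℤ) = n).card : ℝ) * (2 * π) ≤
      2 ^ k * ∫ x : ℝ in (-π)..π, G k x := by
  have h0 : ((Finset.univ.filter fun α : Fin k → Bool =>
      (∑ j ∈ Finset.range k, j * bval α j : ℤ) = n).card : ℝ) * (2 * π) =
      ‖((Finset.univ.filter fun α : Fin k → Bool =>
        (∑ j ∈ Finset.range k, j * bval α j : ℤ) = n).card : ℂ) * ((2 * π : ℝ) : ℂ)‖ := by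
    rw [norm_mul, Complex.norm_natCast, Complex.norm_real, Real.norm_eq_abs,
      abs_of_nonneg (by positivity : (0:ℝ) ≤ 2 * π)]
  rw [h0, count_eq]
  have h1 := intervalIntegral.norm_integral_le_integral_norm
    (f := fun x : ℝ => (∏ j ∈ Finset.range k, (1 + Complex.exp (j * x * Complex.I))) *
      Complex.exp (-n * x * Complex.I)) (a := -π) (b := π) (μ := MeasureTheory.volume)
    (by linarith [Real.pi_pos])
  refine h1.trans ?_
  have h2 : ∀ x : ℝ, ‖(∏ j ∈ Finset.range k, (1 + Complex.exp (j * x * Complex.I))) *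
      Complex.exp (-n * x * Complex.I)‖ = 2 ^ k * G k x := by
    intro x
    rw [norm_mul,
      show (-n : ℂ) * x * Complex.I = ((-n * x : ℝ) : ℂ) * Complex.I by push_cast; ring,
      Complex.norm_exp_ofReal_mul_I, mul_one, norm_prod]
    unfold G
    rw [Finset.prod_congr rfl (fun j _ => by
      rw [show ((j:ℂ) * x * Complex.I) = (((j * x : ℝ)):ℂ) * Complex.I by push_cast; ring,
        norm_one_add_exp (j * x)]),
      Finset.prod_mul_distrib, Finset.prod_const, Finset.card_range]
  simp only [h2]
  rw [intervalIntegral.integral_const_mul]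

lemma abs_cos_le (t : ℝ) : |Real.cos t| ≤ Real.exp (-Real.sin t ^ 2 / 2) := by
  refine abs_le_of_sq_le_sq ?_ (Real.exp_pos _).le
  rw [sq (Real.exp _), ← Real.exp_add]
  have h : Real.cos t ^ 2 = 1 - Real.sin t ^ 2 := by
    rw [← Real.sin_sq_add_cos_sq t]; ring
  rw [show Real.cos t ^ 2 = 1 - Real.sin t ^ 2 from h, show (-Real.sin t ^ 2 / 2 + -Real.sin t ^ 2 / 2) = -Real.sin t ^ 2 by ring]
  linarith [Real.add_one_le_exp (-Real.sin t ^ 2)]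

lemma G_le_exp (k : ℕ) (x : ℝ) :
    G k x ≤ Real.exp (-(∑ j ∈ Finset.range k, Real.sin (j * x / 2) ^ 2) / 2) := by
  unfold G
  rw [show (-(∑ j ∈ Finset.range k, Real.sin (j * x / 2) ^ 2) / 2)
      = ∑ j ∈ Finset.range k, (-Real.sin (j * x / 2) ^ 2 / 2) by
    rw [neg_div, ← Finset.sum_div, Finset.sum_neg_distrib, neg_div], Real.exp_sum]
  exact Finset.prod_le_prod (fun j _ => abs_nonneg _) (fun j _ => abs_cos_le _)

lemma norm_exp_sub_one (x : ℝ) :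
    ‖Complex.exp (x * Complex.I) - 1‖ = 2 * |Real.sin (x / 2)| := by
  rw [Complex.exp_mul_I]
  have h : Complex.cos x + Complex.sin x * Complex.I - 1 =
      Complex.ofReal (Real.cos x - 1) + Complex.ofReal (Real.sin x) * Complex.I := by
    push_cast [← Complex.ofReal_cos, ← Complex.ofReal_sin]; ring
  rw [h, Complex.norm_def, Complex.normSq_add_mul_I]
  have h2 : (Real.cos x - 1) ^ 2 + Real.sin x ^ 2 = (2 * Real.sin (x / 2)) ^ 2 := by
    have hs := Real.sin_sq_eq_half_sub (x / 2)
    have hp := Real.sin_sq_add_cos_sq x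
    rw [show 2 * (x / 2) = x by ring] at hs
    nlinarith [hs, hp]
  rw [h2, Real.sqrt_sq_eq_abs, abs_mul, abs_of_nonneg (by norm_num : (0:ℝ) ≤ 2)]

lemma sum_cos_le (k : ℕ) {x : ℝ} (hx0 : 0 < x) (hxπ : x ≤ π) :
    ∑ j ∈ Finset.range k, Real.cos (j * x) ≤ π / x := by
  have hsin : Real.sin (x / 2) > 0 :=
    Real.sin_pos_of_pos_of_lt_pi (by linarith) (by linarith [Real.pi_pos])
  have hsin2 : x / π ≤ Real.sin (x / 2) := by
    have := Real.mul_le_sin (x := x / 2) (by linarith) (by linarith)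
    calc x / π = 2 / π * (x / 2) := by field_simp
    _ ≤ _ := this
  have hne : Complex.exp (x * Complex.I) ≠ 1 := by
    intro h
    have := norm_exp_sub_one x
    rw [h, sub_self, norm_zero] at this
    rw [abs_of_pos hsin] at this
    linarith
  have hre : ∀ j : ℕ, Real.cos (j * x) = (Complex.exp (x * Complex.I) ^ j).re := by
    intro j
    rw [← Complex.exp_nat_mul, show (j : ℂ) * (x * Complex.I) = ((j * x : ℝ) : ℂ) * Complex.I by
      push_cast; ring, Complex.exp_ofReal_mul_I_re]
  calc ∑ j ∈ Finset.range k, Real.cos (j * x)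
      = (∑ j ∈ Finset.range k, Complex.exp (x * Complex.I) ^ j).re := by
        rw [Complex.re_sum]; exact Finset.sum_congr rfl fun j _ => hre j
    _ ≤ ‖∑ j ∈ Finset.range k, Complex.exp (x * Complex.I) ^ j‖ :=
        Complex.re_le_norm _
    _ = ‖Complex.exp (x * Complex.I) ^ k - 1‖ /
        ‖Complex.exp (x * Complex.I) - 1‖ := by
        rw [geom_sum_eq hne, norm_div]
    _ ≤ 2 / (2 * Real.sin (x / 2)) := by
        have hpos : 0 < 2 * Real.sin (x / 2) := by linarith
        have hd : ‖Complex.exp (x * Complex.I) - 1‖ = 2 * Real.sin (x / 2) := by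
          rw [norm_exp_sub_one, abs_of_pos hsin]
        have h1 : ‖Complex.exp (x * Complex.I) ^ k‖ = 1 := by
          rw [norm_pow, Complex.norm_exp_ofReal_mul_I, one_pow]
        have hnum : ‖Complex.exp (x * Complex.I) ^ k - 1‖ ≤ 2 := by
          calc ‖Complex.exp (x * Complex.I) ^ k - 1‖
              ≤ ‖Complex.exp (x * Complex.I) ^ k‖ + ‖(1 : ℂ)‖ :=
                norm_sub_le _ _
            _ ≤ 2 := by rw [h1, norm_one]; norm_num
        rw [hd]
        exact (div_le_div_iff_of_pos_right hpos).mpr hnum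
    _ = 1 / Real.sin (x / 2) := by field_simp
    _ ≤ π / x := by
        rw [div_le_div_iff₀ hsin hx0]
        calc 1 * x = x := one_mul x
        _ ≤ π * Real.sin (x/2) := by nlinarith [(div_le_iff₀ Real.pi_pos).1 hsin2]

lemma sum_sin_sq_ge_A {k : ℕ} (hk : 1 ≤ k) {x : ℝ} (hx1 : 2 * π / k ≤ x) (hx2 : x ≤ π) :
    (k : ℝ) / 4 ≤ ∑ j ∈ Finset.range k, Real.sin (j * x / 2) ^ 2 := by
  have hkpos : (0:ℝ) < k := by exact_mod_cast hk
  have hx0 : 0 < x := lt_of_lt_of_le (by positivity) hx1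
  have h1 : ∑ j ∈ Finset.range k, Real.sin (j * x / 2) ^ 2
      = (k : ℝ) / 2 - (∑ j ∈ Finset.range k, Real.cos (j * x)) / 2 := by
    rw [Finset.sum_congr rfl (fun j _ => by
      rw [show (j : ℝ) * x / 2 = (j * x) / 2 by ring, Real.sin_sq_eq_half_sub,
        show 2 * ((j:ℝ) * x / 2) = (j:ℝ) * x by ring])]
    rw [Finset.sum_sub_distrib, Finset.sum_const, Finset.card_range, ← Finset.sum_div]
    push_cast; ring
  rw [h1]
  have h2 : ∑ j ∈ Finset.range k, Real.cos (j * x) ≤ π / x := sum_cos_le k hx0 hx2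
  have h3 : π / x ≤ (k : ℝ) / 2 := by
    rw [div_le_div_iff₀ hx0 (by norm_num : (0:ℝ) < 2)]
    have : 2 * π / k * k ≤ x * k := by
      exact mul_le_mul_of_nonneg_right hx1 (le_of_lt hkpos)
    rw [div_mul_cancel₀] at this
    · linarith
    · exact ne_of_gt hkpos
  linarith

lemma sum_sin_sq_ge_B {k : ℕ} (hk : 16 ≤ k) {x : ℝ} (hx0 : 0 ≤ x) (hx1 : x ≤ 2 * π / k) :
    (k : ℝ) ^ 3 * x ^ 2 / (256 * π ^ 2) ≤ ∑ j ∈ Finset.range k, Real.sin (j * x / 2) ^ 2 := by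
  have hkpos : (0:ℝ) < k := by positivity
  have hsub : Finset.Ico (k/4+1) (k/2) ⊆ Finset.range k := by
    intro j hj
    rw [Finset.mem_Ico] at hj
    rw [Finset.mem_range]
    omega
  have hterm : ∀ j ∈ Finset.Ico (k/4+1) (k/2),
      (k:ℝ)^2 * x^2 / (16 * π^2) ≤ Real.sin (j * x / 2) ^ 2 := by
    intro j hj
    rw [Finset.mem_Ico] at hj
    have hj1 : (k : ℝ) / 4 ≤ j := by
      have : (k : ℝ) ≤ 4 * (j:ℕ) := by exact_mod_cast (by omega : k ≤ 4 * j)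
      linarith
    have hj2 : (j : ℝ) ≤ (k : ℝ) / 2 := by
      have : 2 * (j:ℕ) ≤ k := by omega
      have := (Nat.cast_le (α := ℝ)).mpr this
      push_cast at this
      linarith
    have harg0 : 0 ≤ (j:ℝ) * x / 2 := by positivity
    have harg1 : (j:ℝ) * x / 2 ≤ π / 2 := by
      calc (j:ℝ) * x / 2 ≤ ((k:ℝ)/2) * (2 * π / k) / 2 := by
            apply div_le_div_of_nonneg_right ?_ (by norm_num)
            · exact mul_le_mul hj2 hx1 hx0 (by positivity)
        _ = π / 2 := by field_simp
    have hsin : (j:ℝ) * x / π ≤ Real.sin ((j:ℝ) * x / 2) := by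
      have := Real.mul_le_sin harg0 harg1
      calc (j:ℝ) * x / π = 2 / π * ((j:ℝ) * x / 2) := by field_simp
        _ ≤ _ := this
    have hlow : (k:ℝ) * x / (4 * π) ≤ (j:ℝ) * x / π := by
      rw [div_le_div_iff₀ (by positivity) (by positivity)]
      have : (k:ℝ) * x * π ≤ 4 * ((j:ℝ) * x) * π := by
        have : (k:ℝ) * x ≤ 4 * ((j:ℝ) * x) := by nlinarith
        nlinarith [Real.pi_pos]
      linarith
    have h0 : 0 ≤ (k:ℝ) * x / (4 * π) := by positivity
    calc (k:ℝ)^2 * x^2 / (16 * π^2) = ((k:ℝ) * x / (4 * π))^2 := by ring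
      _ ≤ Real.sin ((j:ℝ) * x / 2) ^ 2 := by
          apply sq_le_sq' <;> nlinarith
  calc (k : ℝ) ^ 3 * x ^ 2 / (256 * π ^ 2)
      = ((k:ℝ)/16) * ((k:ℝ)^2 * x^2 / (16 * π^2)) := by ring
    _ ≤ (Finset.Ico (k/4+1) (k/2)).card * ((k:ℝ)^2 * x^2 / (16 * π^2)) := by
        apply mul_le_mul_of_nonneg_right ?_ (by positivity)
        rw [Nat.card_Ico]
        have : k ≤ 16 * (k/2 - (k/4+1)) := by omega
        have := (Nat.cast_le (α := ℝ)).mpr this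
        push_cast at this
        linarith
    _ ≤ ∑ j ∈ Finset.Ico (k/4+1) (k/2), Real.sin (j * x / 2) ^ 2 := by
        have := Finset.card_nsmul_le_sum (Finset.Ico (k/4+1) (k/2)) _ _ hterm
        simpa [nsmul_eq_mul] using this
    _ ≤ ∑ j ∈ Finset.range k, Real.sin (j * x / 2) ^ 2 :=
        Finset.sum_le_sum_of_subset_of_nonneg hsub (fun j _ _ => sq_nonneg _)

lemma pointwise_bound {k : ℕ} (hk : 16 ≤ k) {x : ℝ} (hx : |x| ≤ π) :
    G k x ≤ Real.exp (-(k:ℝ)/8) + Real.exp (-((k:ℝ)^3/(512*π^2)) * x^2) := by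
  have hk1 : 1 ≤ k := by omega
  have hGeven : G k x = G k |x| := by
    unfold G
    refine Finset.prod_congr rfl fun j _ => ?_
    rcases abs_choice x with h | h
    · rw [h]
    · rw [h, show (j:ℝ) * -x / 2 = -((j:ℝ) * x / 2) by ring, Real.cos_neg]
  have hy0 : 0 ≤ |x| := abs_nonneg x
  have hxsq : |x|^2 = x^2 := sq_abs x
  rw [hGeven]
  rcases le_or_gt (2 * π / k) |x| with hcase | hcase
  · have hA := sum_sin_sq_ge_A hk1 hcase hx
    have := (G_le_exp k |x|).trans (Real.exp_le_exp.mpr (by linarith :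
      -(∑ j ∈ Finset.range k, Real.sin (j * |x| / 2) ^ 2) / 2 ≤ -(k:ℝ)/8))
    have hpos : 0 < Real.exp (-((k:ℝ)^3/(512*π^2)) * x^2) := Real.exp_pos _
    linarith
  · have hB := sum_sin_sq_ge_B hk hy0 hcase.le
    have h2 : -(∑ j ∈ Finset.range k, Real.sin (j * |x| / 2) ^ 2) / 2
        ≤ -((k:ℝ)^3/(512*π^2)) * x^2 := by
      rw [show -((k:ℝ)^3/(512*π^2)) * x^2 = -((k:ℝ)^3 * x^2/(256*π^2))/2 by ring]
      rw [← hxsq] at *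
      linarith
    have := (G_le_exp k |x|).trans (Real.exp_le_exp.mpr h2)
    have hpos : 0 < Real.exp (-(k:ℝ)/8) := Real.exp_pos _
    linarith

lemma integral_G_le {k : ℕ} (hk : 16 ≤ k) :
    (∫ x : ℝ in (-π)..π, G k x) ≤
      2 * π * Real.exp (-(k:ℝ)/8) + Real.sqrt (512 * π^3) / Real.sqrt ((k:ℝ)^3) := by
  have hb : (0:ℝ) < (k:ℝ)^3/(512*π^2) := by positivity
  have hGcont : Continuous (G k) := by
    unfold G
    exact continuous_finset_prod _ fun j _ => (Real.continuous_cos.comp (by continuity)).abs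
  have hHcont : Continuous (fun x : ℝ =>
      Real.exp (-(k:ℝ)/8) + Real.exp (-((k:ℝ)^3/(512*π^2)) * x^2)) := by continuity
  have hmono := intervalIntegral.integral_mono_on (μ := MeasureTheory.volume)
    (by linarith [Real.pi_pos] : (-π:ℝ) ≤ π)
    (hGcont.intervalIntegrable _ _) (hHcont.intervalIntegrable _ _)
    (fun x hx => pointwise_bound hk (abs_le.mpr ⟨hx.1, hx.2⟩))
  refine hmono.trans ?_
  rw [intervalIntegral.integral_add (continuous_const.intervalIntegrable _ _) ((by continuity : Continuous fun x : ℝ => Real.exp (-((k:ℝ)^3/(512*π^2)) * x^2)).intervalIntegrable _ _)]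
  have h1 : (∫ _x : ℝ in (-π)..π, Real.exp (-(k:ℝ)/8)) = 2 * π * Real.exp (-(k:ℝ)/8) := by
    rw [intervalIntegral.integral_const, smul_eq_mul]
    ring
  have h2 : (∫ x : ℝ in (-π)..π, Real.exp (-((k:ℝ)^3/(512*π^2)) * x^2)) ≤
      Real.sqrt (512 * π^3) / Real.sqrt ((k:ℝ)^3) := by
    have hInt : MeasureTheory.Integrable
        (fun x : ℝ => Real.exp (-((k:ℝ)^3/(512*π^2)) * x^2)) := by
      simpa using integrable_exp_neg_mul_sq hb
    calc (∫ x : ℝ in (-π)..π, Real.exp (-((k:ℝ)^3/(512*π^2)) * x^2))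
        ≤ ∫ x : ℝ, Real.exp (-((k:ℝ)^3/(512*π^2)) * x^2) := by
          rw [intervalIntegral.integral_of_le (by linarith [Real.pi_pos])]
          exact MeasureTheory.setIntegral_le_integral hInt
            (MeasureTheory.ae_of_all _ fun x => (Real.exp_pos _).le)
      _ = Real.sqrt (π / ((k:ℝ)^3/(512*π^2))) := by
          simpa using integral_gaussian ((k:ℝ)^3/(512*π^2))
      _ = Real.sqrt (512 * π^3) / Real.sqrt ((k:ℝ)^3) := by
          rw [show π / ((k:ℝ)^3/(512*π^2)) = (512 * π^3) / (k:ℝ)^3 by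
            field_simp, Real.sqrt_div (by positivity)]
  linarith

lemma rpow_neg_three_half (r : ℝ) (hr : 0 ≤ r) :
    r ^ (-(3:ℝ)/2) = (Real.sqrt (r^3))⁻¹ := by
  rw [show (-(3:ℝ)/2) = -((3:ℝ)/2) by ring, Real.rpow_neg hr]
  congr 1
  rw [Real.sqrt_eq_rpow, ← Real.rpow_natCast r 3, ← Real.rpow_mul hr]
  norm_num

lemma exp_small (r : ℝ) (hr : 1 ≤ r) :
    Real.exp (-r/8) ≤ 256 * (Real.sqrt (r^3))⁻¹ := by
  have hr0 : 0 < r := by linarith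
  have hsq : Real.sqrt (r^3) ≤ r^2 := by
    rw [show r^3 = r^2 * r by ring]
    calc Real.sqrt (r^2 * r) ≤ Real.sqrt (r^2 * r^2) := by
          apply Real.sqrt_le_sqrt; nlinarith
      _ = r^2 := by rw [← sq, Real.sqrt_sq (by positivity)]
  have hsqpos : 0 < Real.sqrt (r^3) := Real.sqrt_pos.mpr (by positivity)
  have hexp : r^2/256 ≤ Real.exp (r/8) := by
    have h16 := Real.add_one_le_exp (r/16)
    have hsq2 : (r/16 + 1)^2 ≤ Real.exp (r/16)^2 := by
      apply sq_le_sq' <;> nlinarith [Real.exp_pos (r/16)]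
    have hee : Real.exp (r/16)^2 = Real.exp (r/8) := by
      rw [sq, ← Real.exp_add]
      congr 1; ring
    nlinarith
  rw [show -r/8 = -(r/8) by ring, Real.exp_neg]
  calc (Real.exp (r/8))⁻¹ ≤ (r^2/256)⁻¹ := by
        apply inv_anti₀ (by positivity) hexp
    _ = 256 / r^2 := by field_simp
    _ ≤ 256 / Real.sqrt (r^3) := div_le_div_of_nonneg_left (by norm_num) hsqpos hsq
    _ = 256 * (Real.sqrt (r^3))⁻¹ := by rw [div_eq_mul_inv]


/-- For `α_0,…,α_{k-1}` i.i.d. Bernoulli(1/2) (modelled by the uniform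
measure on `{0,1}^k`), there is `C > 0` such that for all `k ≥ 1` and every
integer `n`, `P[∑_{j<k} j·α_j = n] ≤ C·k^{−3/2}`. -/
theorem point_mass_bound :
    ∃ C > (0 : ℝ), ∀ k : ℕ, 1 ≤ k → ∀ n : ℤ,
      (((Finset.univ.filter fun α : Fin k → Bool =>
          (∑ j ∈ Finset.range k, j * bval α j : ℤ) = n).card : ℝ) / 2 ^ k) ≤
        C * (k : ℝ) ^ (-(3 : ℝ) / 2) := by
  have hQ0 : (0:ℝ) ≤ Real.sqrt (512 * π^3) := Real.sqrt_nonneg _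
  have hπ : (0:ℝ) < π := Real.pi_pos
  refine ⟨256 + Real.sqrt (512*π^3)/(2*π) + 64, by positivity, ?_⟩
  intro k hk n
  have hk0 : (0:ℝ) < (k:ℝ) := by exact_mod_cast hk
  have hS : ((k:ℝ)) ^ (-(3:ℝ)/2) = (Real.sqrt ((k:ℝ)^3))⁻¹ :=
    rpow_neg_three_half _ hk0.le
  have hSpos : (0:ℝ) < (Real.sqrt ((k:ℝ)^3))⁻¹ := by
    rw [inv_pos]
    exact Real.sqrt_pos.mpr (by positivity)
  have h2pk : (0:ℝ) < 2^k := by positivity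
  rcases lt_or_ge k 16 with hk16 | hk16
  · -- small k
    have hcard : ((Finset.univ.filter fun α : Fin k → Bool =>
        (∑ j ∈ Finset.range k, j * bval α j : ℤ) = n).card : ℝ) ≤ 2^k := by
      have h1 := Finset.card_filter_le (Finset.univ : Finset (Fin k → Bool))
        (fun α => (∑ j ∈ Finset.range k, j * bval α j : ℤ) = n)
      have h2 : (Finset.univ : Finset (Fin k → Bool)).card = 2^k := by
        rw [Finset.card_univ, Fintype.card_fun]
        simp
      calc ((Finset.univ.filter fun α : Fin k → Bool =>
            (∑ j ∈ Finset.range k, j * bval α j : ℤ) = n).card : ℝ)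
          ≤ ((Finset.univ : Finset (Fin k → Bool)).card : ℝ) := by exact_mod_cast h1
        _ = 2^k := by rw [h2]; push_cast; ring
    have hone : ((Finset.univ.filter fun α : Fin k → Bool =>
        (∑ j ∈ Finset.range k, j * bval α j : ℤ) = n).card : ℝ) / 2^k ≤ 1 :=
      (div_le_one h2pk).mpr hcard
    have h16 : (k:ℝ) ≤ 16 := by exact_mod_cast hk16.le
    have hmono := Real.rpow_le_rpow_of_nonpos hk0 h16
      (by norm_num : (-(3:ℝ)/2) ≤ 0)
    have h64 : (16:ℝ) ^ (-(3:ℝ)/2) = 1/64 := by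
      rw [rpow_neg_three_half 16 (by norm_num),
        show (16:ℝ)^3 = 64^2 by norm_num, Real.sqrt_sq (by norm_num : (0:ℝ) ≤ 64)]
      norm_num
    rw [h64] at hmono
    have hC0 : (0:ℝ) ≤ 256 + Real.sqrt (512*π^3)/(2*π) := by positivity
    calc ((Finset.univ.filter fun α : Fin k → Bool =>
          (∑ j ∈ Finset.range k, j * bval α j : ℤ) = n).card : ℝ) / 2^k
        ≤ 1 := hone
      _ = 64 * (1/64) := by norm_num
      _ ≤ (256 + Real.sqrt (512*π^3)/(2*π) + 64) * (k:ℝ) ^ (-(3:ℝ)/2) :=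
          mul_le_mul (by linarith) hmono (by norm_num) (by linarith)
  · -- large k
    have h1 := count_le_integral k n
    have h2 := integral_G_le hk16
    have h3 := exp_small (k:ℝ) (by exact_mod_cast hk)
    set cnt := ((Finset.univ.filter fun α : Fin k → Bool =>
        (∑ j ∈ Finset.range k, j * bval α j : ℤ) = n).card : ℝ) with hcnt
    set S := (Real.sqrt ((k:ℝ)^3))⁻¹ with hSdef
    set Q := Real.sqrt (512 * π^3) with hQdef
    have hcnt0 : 0 ≤ cnt := Nat.cast_nonneg _
    rw [hS, div_le_iff₀ h2pk]
    have key : cnt * (2*π) ≤ ((256 + Q/(2*π) + 64) * S * 2^k) * (2*π) := by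
      have hQS : Q / Real.sqrt ((k:ℝ)^3) = Q * S := by
        rw [hSdef, div_eq_mul_inv]
      calc cnt * (2*π) ≤ 2^k * ∫ x : ℝ in (-π)..π, G k x := h1
        _ ≤ 2^k * (2 * π * Real.exp (-(k:ℝ)/8) + Q * S) := by
            rw [← hQS]
            exact mul_le_mul_of_nonneg_left h2 h2pk.le
        _ ≤ 2^k * (2 * π * (256 * S) + Q * S) := by
            apply mul_le_mul_of_nonneg_left ?_ h2pk.le
            have := mul_le_mul_of_nonneg_left h3 (by positivity : (0:ℝ) ≤ 2*π)
            linarith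
        _ = ((256 + Q/(2*π)) * S * 2^k) * (2*π) := by field_simp
        _ ≤ ((256 + Q/(2*π) + 64) * S * 2^k) * (2*π) := by
            exact mul_le_mul_of_nonneg_right (mul_le_mul_of_nonneg_right
              (mul_le_mul_of_nonneg_right (by linarith : (256 + Q/(2*π)) ≤ 256 + Q/(2*π) + 64)
                hSpos.le) h2pk.le) (by positivity)
    exact le_of_mul_le_mul_right key (by positivity : (0:ℝ) < 2*π)
end

section
/- Let S_k = ∑_{j<k} j·α_j where α_j are i.i.d. Bernoulli(1/2). Conditional on the event ∑_{j<k} α_j = ∑_{j<k} β_j (with β an independent copy), the conditional probability that ∑_{j<k} j·α_j = ∑_{j<k} j·β_j is O(k^{−1}) (in fact O(k^{−1}) suffices via the uniform distribution of ∑_{j<log₂ k} 2^j α_{2^j} on an interval of length ≥ k/2 − 1). -/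
namespace CCB

open Finset

variable {k p : ℕ}

def wt (k : ℕ) (α : Fin k → Bool) : ℕ := ∑ j ∈ Finset.range k, bval α j
def sg (k : ℕ) (α : Fin k → Bool) : ℕ := ∑ j ∈ Finset.range k, j * bval α j

lemma bval_fin (α : Fin k → Bool) (i : Fin k) : bval α i = (α i).toNat := by
  simp only [bval, i.isLt, dif_pos, Fin.eta]
  cases α i <;> simp

lemma wt_eq (α : Fin k → Bool) : wt k α = ∑ i : Fin k, (α i).toNat := by
  rw [wt, ← Fin.sum_univ_eq_sum_range (fun j => bval α j) k]
  exact Finset.sum_congr rfl fun i _ => (bval_fin α i)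

lemma sg_eq (α : Fin k → Bool) : sg k α = ∑ i : Fin k, (i : ℕ) * (α i).toNat := by
  rw [sg, ← Fin.sum_univ_eq_sum_range (fun j => j * bval α j) k]
  exact Finset.sum_congr rfl fun i _ => by rw [bval_fin]

/-- the cyclic shift by `r` on the first `p` indices -/
def perm (r : ℕ) (hp0 : 0 < p) (hpk : p ≤ k) (i : Fin k) : Fin k :=
  if (i : ℕ) < p then ⟨((i : ℕ) + r) % p, lt_of_lt_of_le (Nat.mod_lt _ hp0) hpk⟩ else i

lemma perm_lt (r : ℕ) (hp0 : 0 < p) (hpk : p ≤ k) (i : Fin k) :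
    ((perm r hp0 hpk i : ℕ) < p) ↔ (i : ℕ) < p := by
  unfold perm
  split
  · exact iff_of_true (Nat.mod_lt _ hp0) ‹_›
  · simp [‹¬ _›]

lemma perm_val (r : ℕ) (hp0 : 0 < p) (hpk : p ≤ k) (i : Fin k) (hi : (i : ℕ) < p) :
    (perm r hp0 hpk i : ℕ) = ((i : ℕ) + r) % p := by
  unfold perm; rw [if_pos hi]

lemma perm_inj (r : ℕ) (hp0 : 0 < p) (hpk : p ≤ k) :
    Function.Injective (perm r hp0 hpk) := by
  intro i j h
  by_cases hi : (i : ℕ) < p <;> by_cases hj : (j : ℕ) < p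
  · have hv : ((i : ℕ) + r) % p = ((j : ℕ) + r) % p := by
      have := congrArg (Fin.val) h
      rwa [perm_val r hp0 hpk i hi, perm_val r hp0 hpk j hj] at this
    have : (i : ℕ) % p = (j : ℕ) % p := Nat.ModEq.add_right_cancel' r hv
    rw [Nat.mod_eq_of_lt hi, Nat.mod_eq_of_lt hj] at this
    exact Fin.ext this
  · exfalso
    have h1 : ((perm r hp0 hpk i : ℕ) < p) := (perm_lt r hp0 hpk i).mpr hi
    rw [h] at h1
    exact hj ((perm_lt r hp0 hpk j).mp h1)
  · exfalso
    have h1 : ((perm r hp0 hpk j : ℕ) < p) := (perm_lt r hp0 hpk j).mpr hj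
    rw [← h] at h1
    exact hi ((perm_lt r hp0 hpk i).mp h1)
  · unfold perm at h
    rwa [if_neg hi, if_neg hj] at h

lemma perm_bij (r : ℕ) (hp0 : 0 < p) (hpk : p ≤ k) :
    Function.Bijective (perm r hp0 hpk) :=
  Finite.injective_iff_bijective.mp (perm_inj r hp0 hpk)

/-- indices below p -/
def idx (p k : ℕ) : Finset (Fin k) := Finset.univ.filter fun i => (i : ℕ) < p

def s1 (p : ℕ) (α : Fin k → Bool) : ℕ := ∑ i ∈ idx p k, (α i).toNat

lemma card_idx (hpk : p ≤ k) : (idx p k).card = p := by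
  have h : (idx p k).card = (Finset.range p).card := by
    apply Finset.card_bij (fun (i : Fin k) _ => (i : ℕ))
    · intro a ha
      simp only [idx, Finset.mem_filter] at ha
      exact Finset.mem_range.mpr ha.2
    · intro a _ b _ h; exact Fin.ext h
    · intro b hb
      have hb' : b < p := Finset.mem_range.mp hb
      exact ⟨⟨b, lt_of_lt_of_le hb' hpk⟩, by simp [idx, hb'], rfl⟩
  rw [h, Finset.card_range]

lemma s1_le (hpk : p ≤ k) (α : Fin k → Bool) : s1 p α ≤ p := by
  calc s1 p α ≤ ∑ i ∈ idx p k, 1 := Finset.sum_le_sum fun i _ => Bool.toNat_le (α i)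
    _ = p := by rw [Finset.sum_const, smul_eq_mul, mul_one, card_idx hpk]

lemma wt_perm (r : ℕ) (hp0 : 0 < p) (hpk : p ≤ k) (α : Fin k → Bool) :
    wt k (α ∘ perm r hp0 hpk) = wt k α := by
  rw [wt_eq, wt_eq]
  exact Fintype.sum_bijective _ (perm_bij r hp0 hpk) _ _ (fun i => rfl)

lemma s1_perm (r : ℕ) (hp0 : 0 < p) (hpk : p ≤ k) (α : Fin k → Bool) :
    s1 p (α ∘ perm r hp0 hpk) = s1 p α := by
  unfold s1
  apply Finset.sum_bij (fun (i : Fin k) _ => perm r hp0 hpk i)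
  · intro a ha
    simp only [idx, Finset.mem_filter, Finset.mem_univ, true_and] at ha ⊢
    exact (perm_lt r hp0 hpk a).mpr ha
  · intro a _ b _ h; exact perm_inj r hp0 hpk h
  · intro b hb
    simp only [idx, Finset.mem_filter, Finset.mem_univ, true_and] at hb
    obtain ⟨a, ha⟩ := (perm_bij r hp0 hpk).2 b
    refine ⟨a, ?_, ha⟩
    simp only [idx, Finset.mem_filter, Finset.mem_univ, true_and]
    rw [← perm_lt r hp0 hpk a, ha]; exact hb
  · intro a _; rfl

lemma sg_perm (r : ℕ) (hp0 : 0 < p) (hpk : p ≤ k) (α : Fin k → Bool) :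
    ((sg k (α ∘ perm r hp0 hpk) : ℕ) : ZMod p)
      = (sg k α : ZMod p) - (r : ZMod p) * (s1 p α : ZMod p) := by
  have cast_sg : ∀ β : Fin k → Bool,
      ((sg k β : ℕ) : ZMod p) = ∑ i : Fin k, ((i : ℕ) : ZMod p) * ((β i).toNat : ZMod p) := by
    intro β; rw [sg_eq]; push_cast; rfl
  have cast_s1 : ((s1 p α : ℕ) : ZMod p) = ∑ i ∈ idx p k, ((α i).toNat : ZMod p) := by
    unfold s1; push_cast; rfl
  rw [cast_sg, cast_sg, cast_s1]
  have hsplit : ∀ g : Fin k → ZMod p,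
      ∑ i : Fin k, g i = ∑ i ∈ idx p k, g i
        + ∑ i ∈ Finset.univ.filter (fun i : Fin k => ¬ (i : ℕ) < p), g i := by
    intro g
    exact (Finset.sum_filter_add_sum_filter_not Finset.univ _ g).symm
  rw [hsplit, hsplit]
  have houter : ∑ i ∈ Finset.univ.filter (fun i : Fin k => ¬ (i : ℕ) < p),
      ((i : ℕ) : ZMod p) * (((α ∘ perm r hp0 hpk) i).toNat : ZMod p)
      = ∑ i ∈ Finset.univ.filter (fun i : Fin k => ¬ (i : ℕ) < p),
      ((i : ℕ) : ZMod p) * ((α i).toNat : ZMod p) := by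
    refine Finset.sum_congr rfl fun i hi => ?_
    simp only [Finset.mem_filter] at hi
    have : perm r hp0 hpk i = i := by unfold perm; rw [if_neg hi.2]
    simp [Function.comp, this]
  have hinner : ∑ i ∈ idx p k,
      ((i : ℕ) : ZMod p) * (((α ∘ perm r hp0 hpk) i).toNat : ZMod p)
      = ∑ j ∈ idx p k, (((j : ℕ) : ZMod p) - (r : ZMod p)) * ((α j).toNat : ZMod p) := by
    apply Finset.sum_bij (fun (i : Fin k) _ => perm r hp0 hpk i)
    · intro a ha
      simp only [idx, Finset.mem_filter, Finset.mem_univ, true_and] at ha ⊢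
      exact (perm_lt r hp0 hpk a).mpr ha
    · intro a _ b _ h; exact perm_inj r hp0 hpk h
    · intro b hb
      simp only [idx, Finset.mem_filter, Finset.mem_univ, true_and] at hb
      obtain ⟨a, ha⟩ := (perm_bij r hp0 hpk).2 b
      refine ⟨a, ?_, ha⟩
      simp only [idx, Finset.mem_filter, Finset.mem_univ, true_and]
      rw [← perm_lt r hp0 hpk a, ha]; exact hb
    · intro a ha
      simp only [idx, Finset.mem_filter, Finset.mem_univ, true_and] at ha
      have hv : ((perm r hp0 hpk a : ℕ) : ZMod p) = ((a : ℕ) : ZMod p) + (r : ZMod p) := by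
        rw [perm_val r hp0 hpk a ha, ZMod.natCast_mod]
        push_cast; ring
      simp only [Function.comp_apply]
      rw [hv]; ring
  rw [houter, hinner]
  have hfin : ∑ j ∈ idx p k, (((j : ℕ) : ZMod p) - (r : ZMod p)) * ((α j).toNat : ZMod p)
      = ∑ j ∈ idx p k, ((j : ℕ) : ZMod p) * ((α j).toNat : ZMod p)
        - (r : ZMod p) * ∑ j ∈ idx p k, ((α j).toNat : ZMod p) := by
    rw [Finset.mul_sum, ← Finset.sum_sub_distrib]
    exact Finset.sum_congr rfl fun j _ => sub_mul _ _ _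
  rw [hfin]
  ring



def Wall (k : ℕ) (s : ℕ) : Finset (Fin k → Bool) :=
  Finset.univ.filter fun α => wt k α = s

def Wg (k p : ℕ) (s : ℕ) (τ : ZMod p) : Finset (Fin k → Bool) :=
  Finset.univ.filter fun α =>
    wt k α = s ∧ s1 p α ≠ 0 ∧ s1 p α ≠ p ∧ ((sg k α : ℕ) : ZMod p) = τ

def Bad (k p : ℕ) : Finset (Fin k → Bool) :=
  Finset.univ.filter fun α => s1 p α = 0 ∨ s1 p α = p

lemma key (hp : p.Prime) (hpk : p ≤ k) (s : ℕ) (τ : ZMod p) :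
    p * (Wg k p s τ).card ≤ (Wall k s).card := by
  haveI : Fact p.Prime := ⟨hp⟩
  have hp0 := hp.pos
  have hcard : ((Finset.range p) ×ˢ (Wg k p s τ)).card = p * (Wg k p s τ).card := by
    rw [Finset.card_product, Finset.card_range]
  rw [← hcard]
  apply Finset.card_le_card_of_injOn (fun q => q.2 ∘ perm q.1 hp0 hpk)
  · rintro ⟨r, α⟩ hq
    simp only [Finset.coe_product, Set.mem_prod, Finset.mem_coe, Finset.mem_product, Finset.mem_range] at hq
    have hα := hq.2
    simp only [Wg, Finset.mem_filter, Finset.mem_univ, true_and] at hα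
    simp only [Finset.mem_coe, Wall, Finset.mem_filter, Finset.mem_univ, true_and]
    rw [wt_perm]; exact hα.1
  · rintro ⟨r, α⟩ hq ⟨r', α'⟩ hq' heq
    simp only [Finset.coe_product, Set.mem_prod, Finset.mem_coe, Finset.mem_range] at hq hq'
    obtain ⟨hr, hα⟩ := hq
    obtain ⟨hr', hα'⟩ := hq'
    simp only [Wg, Finset.mem_filter, Finset.mem_univ, true_and] at hα hα'
    obtain ⟨hwt, hm0, hmp, hτ⟩ := hα
    obtain ⟨hwt', hm0', hmp', hτ'⟩ := hα'
    simp only at heq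
    have hs1 : s1 p α = s1 p α' := by
      rw [← s1_perm r hp0 hpk α, ← s1_perm r' hp0 hpk α', heq]
    have hw : ((sg k (α ∘ perm r hp0 hpk) : ℕ) : ZMod p)
        = ((sg k (α' ∘ perm r' hp0 hpk) : ℕ) : ZMod p) := by rw [heq]
    rw [sg_perm, sg_perm, hτ, hτ', hs1] at hw
    have hrr : (r : ZMod p) * ((s1 p α' : ℕ) : ZMod p)
        = (r' : ZMod p) * ((s1 p α' : ℕ) : ZMod p) := sub_right_inj.mp hw
    have hmne : ((s1 p α' : ℕ) : ZMod p) ≠ 0 := by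
      rw [Ne, ZMod.natCast_eq_zero_iff]
      intro hdvd
      have hle : p ≤ s1 p α' := Nat.le_of_dvd (Nat.pos_of_ne_zero hm0') hdvd
      have hle2 := s1_le hpk α'
      omega
    have hcast : (r : ZMod p) = (r' : ZMod p) := mul_right_cancel₀ hmne hrr
    have hreq : r = r' := by
      have h1 := ZMod.val_cast_of_lt (n := p) hr
      have h2 := ZMod.val_cast_of_lt (n := p) hr'
      rw [hcast, h2] at h1
      exact h1.symm
    subst hreq
    have hfun : α = α' := by
      funext j
      obtain ⟨i, hi⟩ := (perm_bij r hp0 hpk).2 j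
      have hc := congrFun heq i
      simp only [Function.comp_apply] at hc
      rw [← hi]; exact hc
    rw [hfun]

lemma const_card (hpk : p ≤ k) (b : Bool) :
    (Finset.univ.filter fun α : Fin k → Bool => ∀ i ∈ idx p k, α i = b).card
      ≤ 2 ^ (k - p) := by
  have h2 : ((Finset.univ : Finset (Fin (k - p) → Bool))).card = 2 ^ (k - p) := by
    rw [Finset.card_univ, Fintype.card_fun, Fintype.card_bool, Fintype.card_fin]
  rw [← h2]
  apply Finset.card_le_card_of_injOn
    (fun α (j : Fin (k - p)) => α ⟨p + (j : ℕ), by omega⟩)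
  · intro α _; exact Finset.mem_univ _
  · intro α hα α' hα' heq
    simp only [Finset.coe_filter, Set.mem_setOf_eq, Finset.mem_univ, true_and] at hα hα'
    funext i
    by_cases hi : (i : ℕ) < p
    · rw [hα i (by simp [idx, hi]), hα' i (by simp [idx, hi])]
    · have hik : (i : ℕ) - p < k - p := by omega
      have hkey := congrFun heq ⟨(i : ℕ) - p, hik⟩
      simp only at hkey
      have hfin : (⟨p + ((i : ℕ) - p), by omega⟩ : Fin k) = i := by
        apply Fin.ext; simp; omega
      rwa [hfin] at hkey

lemma bad_card (hp0 : 0 < p) (hpk : p ≤ k) :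
    (Bad k p).card ≤ 2 ^ (k - p) + 2 ^ (k - p) := by
  have hsub : Bad k p ⊆
      (Finset.univ.filter fun α : Fin k → Bool => ∀ i ∈ idx p k, α i = false)
        ∪ (Finset.univ.filter fun α : Fin k → Bool => ∀ i ∈ idx p k, α i = true) := by
    intro α hα
    simp only [Bad, Finset.mem_filter, Finset.mem_univ, true_and] at hα
    rcases hα with h0 | hp'
    · apply Finset.mem_union_left
      simp only [Finset.mem_filter, Finset.mem_univ, true_and]
      intro i hi
      have := Finset.sum_eq_zero_iff.mp h0 i hi
      cases hb : α i
      · rfl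
      · rw [hb] at this; simp at this
    · apply Finset.mem_union_right
      simp only [Finset.mem_filter, Finset.mem_univ, true_and]
      intro i hi
      by_contra hb
      have hb' : α i = false := by cases hc : α i; rfl; exact absurd hc hb
      have hlt : s1 p α < p := by
        have : s1 p α < ∑ i ∈ idx p k, 1 := by
          apply Finset.sum_lt_sum (fun j _ => Bool.toNat_le (α j))
          exact ⟨i, hi, by rw [hb']; simp⟩
        rwa [Finset.sum_const, smul_eq_mul, mul_one, card_idx hpk] at this
      omega
  calc (Bad k p).card ≤ _ := Finset.card_le_card hsub
    _ ≤ _ + _ := Finset.card_union_le _ _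
    _ ≤ 2 ^ (k - p) + 2 ^ (k - p) :=
        add_le_add (const_card hpk false) (const_card hpk true)

lemma point (hp : p.Prime) (hpk : p ≤ k) (s t : ℕ) :
    p * ((Finset.univ.filter fun α : Fin k → Bool => wt k α = s ∧ sg k α = t).card)
      ≤ (Wall k s).card + p * (Bad k p).card := by
  have hsub : (Finset.univ.filter fun α : Fin k → Bool => wt k α = s ∧ sg k α = t)
      ⊆ Wg k p s ((t : ℕ) : ZMod p) ∪ Bad k p := by
    intro α hα
    simp only [Finset.mem_filter, Finset.mem_univ, true_and] at hα
    by_cases hb : s1 p α = 0 ∨ s1 p α = p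
    · exact Finset.mem_union_right _ (by simp [Bad, hb])
    · push_neg at hb
      apply Finset.mem_union_left
      simp only [Wg, Finset.mem_filter, Finset.mem_univ, true_and]
      exact ⟨hα.1, hb.1, hb.2, by rw [hα.2]⟩
  calc p * ((Finset.univ.filter fun α : Fin k → Bool => wt k α = s ∧ sg k α = t).card)
      ≤ p * ((Wg k p s ((t : ℕ) : ZMod p)).card + (Bad k p).card) :=
        Nat.mul_le_mul_left _ ((Finset.card_le_card hsub).trans (Finset.card_union_le _ _))
    _ = p * (Wg k p s ((t : ℕ) : ZMod p)).card + p * (Bad k p).card := Nat.mul_add _ _ _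
    _ ≤ (Wall k s).card + p * (Bad k p).card :=
        Nat.add_le_add_right (key hp hpk s _) _



lemma wt_le (α : Fin k → Bool) : wt k α ≤ k := by
  calc wt k α ≤ ∑ _i : Fin k, 1 := by
        rw [wt_eq]; exact Finset.sum_le_sum fun i _ => Bool.toNat_le _
    _ = k := by simp

lemma sg_lt (hk : 1 ≤ k) (α : Fin k → Bool) : sg k α < k * k := by
  obtain ⟨m, rfl⟩ : ∃ m, k = m + 1 := ⟨k - 1, by omega⟩
  have h1 : sg (m + 1) α ≤ ∑ _i : Fin (m + 1), m * 1 := by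
    rw [sg_eq]
    exact Finset.sum_le_sum fun i _ => Nat.mul_le_mul (by omega) (Bool.toNat_le _)
  simp only [Finset.sum_const, Finset.card_univ, Fintype.card_fin, smul_eq_mul,
    mul_one] at h1
  calc sg (m + 1) α ≤ (m + 1) * m := h1
    _ < (m + 1) * (m + 1) := by nlinarith

/-- generic: pairs with equal f-value counted by sum of squared fiber sizes -/
lemma card_pairs_eq {X V : Type*} [Fintype X] [DecidableEq X] [DecidableEq V]
    (f : X → V) (S : Finset V) (hS : ∀ x, f x ∈ S) :
    (Finset.univ.filter fun q : X × X => f q.1 = f q.2).card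
      = ∑ v ∈ S, ((Finset.univ.filter fun x => f x = v).card) ^ 2 := by
  rw [Finset.card_filter, Fintype.sum_prod_type]
  have h1 : ∀ x : X, (∑ y : X, if f x = f y then (1 : ℕ) else 0)
      = ((Finset.univ.filter fun y => f y = f x).card) := by
    intro x
    rw [Finset.card_filter]
    exact Finset.sum_congr rfl fun y _ => by simp [eq_comm]
  calc (∑ x : X, ∑ y : X, if f x = f y then (1 : ℕ) else 0)
      = ∑ x : X, ((Finset.univ.filter fun y => f y = f x).card) :=
        Finset.sum_congr rfl fun x _ => h1 x
    _ = ∑ v ∈ S, ∑ x ∈ Finset.univ.filter fun x => f x = v,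
          ((Finset.univ.filter fun y => f y = f x).card) :=
        (Finset.sum_fiberwise_of_maps_to (fun x _ => hS x) _).symm
    _ = ∑ v ∈ S, ((Finset.univ.filter fun x => f x = v).card) ^ 2 := by
        refine Finset.sum_congr rfl fun v _ => ?_
        rw [sq]
        rw [Finset.sum_congr rfl (fun x hx => by
          rw [(Finset.mem_filter.mp hx).2])]
        simp [Finset.sum_const, mul_comm]

/-- the full invariant -/
def F (k : ℕ) (α : Fin k → Bool) : ℕ × ℕ := (wt k α, sg k α)

lemma fiber_eq (s t : ℕ) :
    (Finset.univ.filter fun α : Fin k → Bool => F k α = (s, t))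
      = Finset.univ.filter fun α : Fin k → Bool => wt k α = s ∧ sg k α = t := by
  apply Finset.filter_congr
  intro α _
  simp [F, Prod.ext_iff]

lemma sum_wall (s : ℕ) (hk : 1 ≤ k) :
    ∑ t ∈ Finset.range (k * k),
        (Finset.univ.filter fun α : Fin k → Bool => wt k α = s ∧ sg k α = t).card
      = (Wall k s).card := by
  have h := Finset.card_eq_sum_card_fiberwise
    (f := fun α : Fin k → Bool => sg k α) (s := Wall k s) (t := Finset.range (k * k))
    (fun α _ => Finset.mem_range.mpr (sg_lt hk α))
  rw [h]
  refine Finset.sum_congr rfl fun t _ => ?_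
  congr 1
  rw [Wall, Finset.filter_filter]

lemma per_s (hk : 1 ≤ k) (hp : p.Prime) (hpk : p ≤ k) (s : ℕ) :
    p * ∑ t ∈ Finset.range (k * k),
        ((Finset.univ.filter fun α : Fin k → Bool => F k α = (s, t)).card) ^ 2
      ≤ ((Wall k s).card + p * (Bad k p).card) * (Wall k s).card := by
  have h1 : ∀ t : ℕ, (Finset.univ.filter fun α : Fin k → Bool => F k α = (s, t)).card
      = (Finset.univ.filter fun α : Fin k → Bool => wt k α = s ∧ sg k α = t).card := by
    intro t; rw [fiber_eq]
  calc p * ∑ t ∈ Finset.range (k * k),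
        ((Finset.univ.filter fun α : Fin k → Bool => F k α = (s, t)).card) ^ 2
      = ∑ t ∈ Finset.range (k * k),
        p * ((Finset.univ.filter fun α : Fin k → Bool => F k α = (s, t)).card) ^ 2 :=
        Finset.mul_sum _ _ _
    _ ≤ ∑ t ∈ Finset.range (k * k),
        ((Wall k s).card + p * (Bad k p).card)
          * (Finset.univ.filter fun α : Fin k → Bool => wt k α = s ∧ sg k α = t).card := by
        refine Finset.sum_le_sum fun t _ => ?_
        rw [h1, sq, ← Nat.mul_assoc]
        exact Nat.mul_le_mul_right _ (point hp hpk s t)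
    _ = ((Wall k s).card + p * (Bad k p).card) * (Wall k s).card := by
        rw [← Finset.mul_sum, sum_wall s hk]

lemma sum_wall_all : ∑ s ∈ Finset.range (k + 1), (Wall k s).card = 2 ^ k := by
  have h := Finset.card_eq_sum_card_fiberwise
    (f := wt k) (s := Finset.univ) (t := Finset.range (k + 1))
    (fun α _ => Finset.mem_range.mpr (Nat.lt_succ_of_le (wt_le α)))
  rw [Finset.card_univ, Fintype.card_fun, Fintype.card_bool, Fintype.card_fin] at h
  simp only [Wall]
  exact h.symm

lemma total (hk : 1 ≤ k) (hp : p.Prime) (hpk : p ≤ k) :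
    p * (Finset.univ.filter fun q : (Fin k → Bool) × (Fin k → Bool) =>
          F k q.1 = F k q.2).card
      ≤ (Finset.univ.filter fun q : (Fin k → Bool) × (Fin k → Bool) =>
          wt k q.1 = wt k q.2).card + p * ((Bad k p).card * 2 ^ k) := by
  have hmem : ∀ α : Fin k → Bool,
      F k α ∈ (Finset.range (k + 1)) ×ˢ (Finset.range (k * k)) := by
    intro α
    rw [Finset.mem_product]
    exact ⟨Finset.mem_range.mpr (Nat.lt_succ_of_le (wt_le α)),
      Finset.mem_range.mpr (sg_lt hk α)⟩
  rw [card_pairs_eq (F k) _ hmem,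
    card_pairs_eq (wt k) (Finset.range (k + 1))
      (fun α => Finset.mem_range.mpr (Nat.lt_succ_of_le (wt_le α))),
    Finset.sum_product]
  calc p * ∑ s ∈ Finset.range (k + 1), ∑ t ∈ Finset.range (k * k),
        ((Finset.univ.filter fun α : Fin k → Bool => F k α = (s, t)).card) ^ 2
      = ∑ s ∈ Finset.range (k + 1), p * ∑ t ∈ Finset.range (k * k),
        ((Finset.univ.filter fun α : Fin k → Bool => F k α = (s, t)).card) ^ 2 :=
        Finset.mul_sum _ _ _
    _ ≤ ∑ s ∈ Finset.range (k + 1),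
        ((Wall k s).card + p * (Bad k p).card) * (Wall k s).card :=
        Finset.sum_le_sum fun s _ => per_s hk hp hpk s
    _ = ∑ s ∈ Finset.range (k + 1),
          ((Wall k s).card * (Wall k s).card
            + p * (Bad k p).card * (Wall k s).card) :=
        Finset.sum_congr rfl fun s _ => add_mul _ _ _
    _ = ∑ s ∈ Finset.range (k + 1), (Wall k s).card * (Wall k s).card
        + p * (Bad k p).card * ∑ s ∈ Finset.range (k + 1), (Wall k s).card := by
        rw [Finset.sum_add_distrib, Finset.mul_sum]
    _ = ∑ s ∈ Finset.range (k + 1),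
          ((Finset.univ.filter fun α : Fin k → Bool => wt k α = s).card) ^ 2
        + p * ((Bad k p).card * 2 ^ k) := by
        rw [sum_wall_all]
        congr 1
        · exact Finset.sum_congr rfl fun s _ => (sq _).symm
        · rw [Nat.mul_assoc]

lemma nb_low :
    4 ^ k ≤ (k + 1) ^ 2 * ∑ s ∈ Finset.range (k + 1),
      ((Finset.univ.filter fun α : Fin k → Bool => wt k α = s).card) ^ 2 := by
  have hex : ∃ s ∈ Finset.range (k + 1), 2 ^ k ≤ (k + 1) * (Wall k s).card := by
    apply Finset.exists_le_of_sum_le ⟨0, Finset.mem_range.mpr (by omega)⟩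
    rw [← Finset.mul_sum, sum_wall_all]
    simp [Finset.sum_const, mul_comm]
  obtain ⟨s, hs, hle⟩ := hex
  have h1 : (4 : ℕ) ^ k = (2 ^ k) * (2 ^ k) := by
    rw [← Nat.mul_pow]
  have h2 : (2 ^ k) * (2 ^ k) ≤ ((k + 1) * (Wall k s).card) * ((k + 1) * (Wall k s).card) :=
    Nat.mul_le_mul hle hle
  have h3 : ((k + 1) * (Wall k s).card) * ((k + 1) * (Wall k s).card)
      = (k + 1) ^ 2 * ((Wall k s).card ^ 2) := by ring
  have h4 : (Wall k s).card ^ 2 ≤ ∑ s ∈ Finset.range (k + 1),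
      ((Finset.univ.filter fun α : Fin k → Bool => wt k α = s).card) ^ 2 :=
    Finset.single_le_sum
      (f := fun j => ((Finset.univ.filter fun α : Fin k → Bool => wt k α = j).card) ^ 2)
      (fun i _ => Nat.zero_le _) hs
  calc (4 : ℕ) ^ k = (2 ^ k) * (2 ^ k) := h1
    _ ≤ (k + 1) ^ 2 * ((Wall k s).card ^ 2) := h2.trans_eq h3
    _ ≤ _ := Nat.mul_le_mul_left _ h4

lemma arith (hk2 : k / 2 < p) : 2 * k * (k + 1) ^ 2 ≤ 1024 * 2 ^ p := by
  have h8 : k + 1 ≤ 8 * 2 ^ (k / 8) := by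
    have := Nat.lt_two_pow_self (n := k / 8)
    omega
  have h3 : k / 8 * 3 ≤ k / 2 := by omega
  calc 2 * k * (k + 1) ^ 2 ≤ 2 * (k + 1) ^ 3 := by nlinarith
    _ ≤ 2 * (8 * 2 ^ (k / 8)) ^ 3 := by
        have := Nat.pow_le_pow_left h8 3
        omega
    _ = 1024 * 2 ^ (k / 8 * 3) := by
        rw [mul_pow, ← pow_mul]
        norm_num
        ring
    _ ≤ 1024 * 2 ^ p := by
        have : (2 : ℕ) ^ (k / 8 * 3) ≤ 2 ^ p :=
          Nat.pow_le_pow_right (by omega) (by omega)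
        omega



lemma main_nat (hk : 1 ≤ k) :
    k * (Finset.univ.filter fun q : (Fin k → Bool) × (Fin k → Bool) =>
          F k q.1 = F k q.2).card
      ≤ 2048 * (Finset.univ.filter fun q : (Fin k → Bool) × (Fin k → Bool) =>
          wt k q.1 = wt k q.2).card := by
  set NAB := (Finset.univ.filter fun q : (Fin k → Bool) × (Fin k → Bool) =>
    F k q.1 = F k q.2).card with hNAB
  set NB := (Finset.univ.filter fun q : (Fin k → Bool) × (Fin k → Bool) =>
    wt k q.1 = wt k q.2).card with hNB
  have hABle : NAB ≤ NB := by
    apply Finset.card_le_card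
    intro q hq
    simp only [Finset.mem_filter, Finset.mem_univ, true_and] at hq ⊢
    exact congrArg Prod.fst hq
  by_cases hk1 : k = 1
  · subst hk1; omega
  · have hk2 : 2 ≤ k := by omega
    obtain ⟨p, hp, h1, h2⟩ := Nat.exists_prime_lt_and_le_two_mul (k / 2) (by omega)
    have hpk : p ≤ k := le_trans h2 (by omega)
    have hk2p : k < 2 * p := by omega
    have htot := total (p := p) hk hp hpk
    rw [← hNAB, ← hNB] at htot
    have hbad := bad_card (k := k) (p := p) hp.pos hpk
    have hlow := nb_low (k := k)
    have hNBeq : NB = ∑ s ∈ Finset.range (k + 1),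
        ((Finset.univ.filter fun α : Fin k → Bool => wt k α = s).card) ^ 2 := by
      rw [hNB]
      exact card_pairs_eq (wt k) (Finset.range (k + 1))
        (fun α => Finset.mem_range.mpr (Nat.lt_succ_of_le (wt_le α)))
    rw [← hNBeq] at hlow
    have harith := arith (k := k) (p := p) h1
    set c := (Bad k p).card * 2 ^ k with hc
    have hE : k * c ≤ 1024 * NB := by
      have e1 : (k + 1) ^ 2 * (k * c) ≤ (2 * k * (k + 1) ^ 2) * (2 ^ (k - p) * 2 ^ k) := by
        rw [hc]
        calc (k + 1) ^ 2 * (k * ((Bad k p).card * 2 ^ k))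
            ≤ (k + 1) ^ 2 * (k * ((2 ^ (k - p) + 2 ^ (k - p)) * 2 ^ k)) := by
              apply Nat.mul_le_mul_left
              apply Nat.mul_le_mul_left
              exact Nat.mul_le_mul_right _ hbad
          _ = (2 * k * (k + 1) ^ 2) * (2 ^ (k - p) * 2 ^ k) := by ring
      have e2 : (2 * k * (k + 1) ^ 2) * (2 ^ (k - p) * 2 ^ k)
          ≤ (1024 * 2 ^ p) * (2 ^ (k - p) * 2 ^ k) :=
        Nat.mul_le_mul_right _ harith
      have e3 : (1024 * 2 ^ p) * (2 ^ (k - p) * 2 ^ k) = 1024 * 4 ^ k := by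
        have : (2 : ℕ) ^ p * 2 ^ (k - p) = 2 ^ k := by
          rw [← pow_add]
          congr 1
          omega
        calc (1024 * 2 ^ p) * (2 ^ (k - p) * 2 ^ k)
            = 1024 * ((2 ^ p * 2 ^ (k - p)) * 2 ^ k) := by ring
          _ = 1024 * (2 ^ k * 2 ^ k) := by rw [this]
          _ = 1024 * 4 ^ k := by rw [← Nat.mul_pow]
      have e4 : (1024 : ℕ) * 4 ^ k ≤ (k + 1) ^ 2 * (1024 * NB) := by
        calc (1024 : ℕ) * 4 ^ k ≤ 1024 * ((k + 1) ^ 2 * NB) :=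
            Nat.mul_le_mul_left _ hlow
          _ = (k + 1) ^ 2 * (1024 * NB) := by ring
      have := (e1.trans e2).trans_eq e3
      have := this.trans e4
      exact Nat.le_of_mul_le_mul_left this (by positivity)
    have step : p * (k * NAB) ≤ p * (2048 * NB) := by
      calc p * (k * NAB) = k * (p * NAB) := by ring
        _ ≤ k * (NB + p * c) := Nat.mul_le_mul_left _ htot
        _ = k * NB + p * (k * c) := by ring
        _ ≤ 2 * p * NB + p * (1024 * NB) := by
            apply Nat.add_le_add
            · exact Nat.mul_le_mul_right _ (le_of_lt hk2p)
            · exact Nat.mul_le_mul_left _ hE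
        _ = p * (1026 * NB) := by ring
        _ ≤ p * (2048 * NB) := by
            apply Nat.mul_le_mul_left
            exact Nat.mul_le_mul_right _ (by norm_num)
    exact Nat.le_of_mul_le_mul_left step hp.pos

end CCB

/-- For `α, β` independent words of i.i.d. Bernoulli(1/2) bits, conditional on
the event `B` that `∑_{j<k} α_j = ∑_{j<k} β_j`, the conditional probability of
the event `A` that `∑_{j<k} j·α_j = ∑_{j<k} j·β_j` is `O(1/k)`: there is
`C > 0` such that `P[A ∩ B] ≤ (C/k)·P[B]` for all `k ≥ 1`.  (Probabilities are
under the uniform measure on pairs of words in `{0,1}^k`.) -/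
theorem conditional_collision_bound :
    ∃ C > (0 : ℝ), ∀ k : ℕ, 1 ≤ k →
      (((Finset.univ.filter fun p : (Fin k → Bool) × (Fin k → Bool) =>
          (∑ j ∈ Finset.range k, bval p.1 j = ∑ j ∈ Finset.range k, bval p.2 j) ∧
          (∑ j ∈ Finset.range k, j * bval p.1 j =
            ∑ j ∈ Finset.range k, j * bval p.2 j)).card : ℝ) / (2 ^ k * 2 ^ k)) ≤
      (C / k) *
        (((Finset.univ.filter fun p : (Fin k → Bool) × (Fin k → Bool) =>
            ∑ j ∈ Finset.range k, bval p.1 j =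
              ∑ j ∈ Finset.range k, bval p.2 j).card : ℝ) / (2 ^ k * 2 ^ k)) := by
  refine ⟨2048, by norm_num, ?_⟩
  intro k hk
  have hAB : (Finset.univ.filter fun p : (Fin k → Bool) × (Fin k → Bool) =>
      (∑ j ∈ Finset.range k, bval p.1 j = ∑ j ∈ Finset.range k, bval p.2 j) ∧
      (∑ j ∈ Finset.range k, j * bval p.1 j =
        ∑ j ∈ Finset.range k, j * bval p.2 j))
      = Finset.univ.filter fun q : (Fin k → Bool) × (Fin k → Bool) =>
          CCB.F k q.1 = CCB.F k q.2 := by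
    apply Finset.filter_congr
    intro q _
    simp [CCB.F, CCB.wt, CCB.sg, Prod.ext_iff]
  have hB : (Finset.univ.filter fun p : (Fin k → Bool) × (Fin k → Bool) =>
      ∑ j ∈ Finset.range k, bval p.1 j = ∑ j ∈ Finset.range k, bval p.2 j)
      = Finset.univ.filter fun q : (Fin k → Bool) × (Fin k → Bool) =>
          CCB.wt k q.1 = CCB.wt k q.2 := by
    apply Finset.filter_congr
    intro q _
    simp [CCB.wt]
  rw [hAB, hB]
  have hmain := CCB.main_nat (k := k) hk
  set A := (Finset.univ.filter fun q : (Fin k → Bool) × (Fin k → Bool) =>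
    CCB.F k q.1 = CCB.F k q.2).card
  set B := (Finset.univ.filter fun q : (Fin k → Bool) × (Fin k → Bool) =>
    CCB.wt k q.1 = CCB.wt k q.2).card
  have hk0 : (0 : ℝ) < k := by exact_mod_cast hk
  have h4 : (0 : ℝ) < (2 : ℝ) ^ k * 2 ^ k := by positivity
  have key : (A : ℝ) ≤ 2048 / k * B := by
    rw [div_mul_eq_mul_div, le_div_iff₀ hk0]
    calc (A : ℝ) * k = ((k * A : ℕ) : ℝ) := by push_cast; ring
      _ ≤ ((2048 * B : ℕ) : ℝ) := by exact_mod_cast hmain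
      _ = 2048 * (B : ℝ) := by push_cast; ring
  calc (A : ℝ) / (2 ^ k * 2 ^ k) ≤ (2048 / k * B) / (2 ^ k * 2 ^ k) := by
        exact div_le_div_of_nonneg_right key h4.le
    _ = 2048 / k * ((B : ℝ) / (2 ^ k * 2 ^ k)) := by ring
end
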